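/- arXiv:2203.13765 — 8 statements merged into one kernel-verified Lean document; each statement's English description precedes it below -/
import Mathlib

section
/- Let F be a simple graph with ‖F‖ edges that admits a proper edge coloring whose color classes L_1, …, L_r satisfy |L_1| ≥ |L_2| ≥ ⋯ ≥ |L_r|, |L_1| ≥ 3 and |L_r| ≥ 2 (i.e., every color class has at least 2 edges and some class has at least 3). Then F has full spectrum: Spec(F) = {0, 1, …, ‖F‖−2} ∪ {‖F‖}; that is, for every k with 0 ≤ k ≤ ‖F‖ and k ≠ ‖F‖−1 there is a proper edge coloring of F with exactly k uniquely colored edges, and no proper edge coloring of F has exactly ‖F‖−1 uniquely colored edges. -/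
open SimpleGraph

/-- A proper edge coloring of `G`: edges sharing a vertex receive distinct colors. -/
def IsProperEdgeColoring {V : Type*} (G : SimpleGraph V) (c : Sym2 V → ℕ) : Prop :=
  ∀ e₁ ∈ G.edgeSet, ∀ e₂ ∈ G.edgeSet,
    e₁ ≠ e₂ → (∃ v, v ∈ e₁ ∧ v ∈ e₂) → c e₁ ≠ c e₂

/-- The set of uniquely colored edges of `F` under the coloring `c`. -/
def uniqueEdges {V : Type*} (F : SimpleGraph V) (c : Sym2 V → ℕ) : Set (Sym2 V) :=
  {e | e ∈ F.edgeSet ∧ ∀ e' ∈ F.edgeSet, c e' = c e → e' = e}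

/-- `Spec F` : the set of `k` such that `F` admits a proper edge coloring with
exactly `k` uniquely colored edges. -/
def Spec {V : Type*} (F : SimpleGraph V) : Set ℕ :=
  {k | ∃ c : Sym2 V → ℕ, IsProperEdgeColoring F c ∧ (uniqueEdges F c).ncard = k}

/-- `f` realizes a copy of `H` inside `G`. -/
def IsCopy {W V : Type*} (H : SimpleGraph W) (G : SimpleGraph V) (f : W → V) : Prop :=
  Function.Injective f ∧ ∀ a b, H.Adj a b → G.Adj (f a) (f b)

/-- Number of uniquely colored edges of the copy of `H` given by `f`. -/
noncomputable def copyUniqueCount {W V : Type*} (H : SimpleGraph W) (c : Sym2 V → ℕ)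
    (f : W → V) : ℕ :=
  {e | e ∈ H.edgeSet ∧ ∀ e' ∈ H.edgeSet, c (e'.map f) = c (e.map f) → e' = e}.ncard

def ContainsKUniqueCopy {W V : Type*} (H : SimpleGraph W) (G : SimpleGraph V)
    (c : Sym2 V → ℕ) (k : ℕ) : Prop :=
  ∃ f : W → V, IsCopy H G f ∧ k ≤ copyUniqueCount H c f

def ContainsExactlyKUniqueCopy {W V : Type*} (H : SimpleGraph W) (G : SimpleGraph V)
    (c : Sym2 V → ℕ) (k : ℕ) : Prop :=
  ∃ f : W → V, IsCopy H G f ∧ copyUniqueCount H c f = k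

def ContainsRainbowCopy {W V : Type*} (H : SimpleGraph W) (G : SimpleGraph V)
    (c : Sym2 V → ℕ) : Prop :=
  ∃ f : W → V, IsCopy H G f ∧
    ∀ e₁ ∈ H.edgeSet, ∀ e₂ ∈ H.edgeSet, e₁ ≠ e₂ → c (e₁.map f) ≠ c (e₂.map f)

/-- The double star `DS_{a,b}`: a dominating edge `y x` with `a` pendant leaves at `y`
and `b` pendant leaves at `x`. -/
def doubleStar (a b : ℕ) : SimpleGraph (Fin 2 ⊕ Fin a ⊕ Fin b) :=
  SimpleGraph.fromEdgeSet
    ({s(Sum.inl 0, Sum.inl 1)} ∪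
     {e | ∃ i : Fin a, e = s(Sum.inl 0, Sum.inr (Sum.inl i))} ∪
     {e | ∃ j : Fin b, e = s(Sum.inl 1, Sum.inr (Sum.inr j))})

/-- The caterpillar `C_{a,b,c}`: a path `x₁x₂x₃` with `a`, `b`, `c` pendant leaves
attached at `x₁`, `x₂`, `x₃` respectively. -/
def caterpillar3 (a b c : ℕ) : SimpleGraph (Fin 3 ⊕ Fin a ⊕ Fin b ⊕ Fin c) :=
  SimpleGraph.fromEdgeSet
    ({s(Sum.inl 0, Sum.inl 1), s(Sum.inl 1, Sum.inl 2)} ∪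
     {e | ∃ i : Fin a, e = s(Sum.inl 0, Sum.inr (Sum.inl i))} ∪
     {e | ∃ i : Fin b, e = s(Sum.inl 1, Sum.inr (Sum.inr (Sum.inl i)))} ∪
     {e | ∃ i : Fin c, e = s(Sum.inl 2, Sum.inr (Sum.inr (Sum.inr i)))})

/-- The rooted tree of depth 2 whose root has `k` children, each with `m` pendant
leaves. -/
def depth2Tree (k m : ℕ) : SimpleGraph (Unit ⊕ Fin k ⊕ Fin k × Fin m) :=
  SimpleGraph.fromEdgeSet
    ({e | ∃ i : Fin k, e = s(Sum.inl (), Sum.inr (Sum.inl i))} ∪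
     {e | ∃ (i : Fin k) (j : Fin m),
        e = s(Sum.inr (Sum.inl i), Sum.inr (Sum.inr (i, j)))})

/-!
Recolouring a set `S` of edges with fresh, pairwise distinct colours makes the uniquely coloured
edges exactly `S`, provided no colour class of the remaining edges is a singleton. From a single
class of size `s` one may so remove any number of edges except `s - 1`; summing over the classes,
a class of size at least `3` fills the gaps that classes of size `2` alone would leave.
Conversely, `‖F‖ - 1` unique edges are impossible: the last edge would share its colour with a
unique one.
-/

open Finset

section Fibers

variable {α β : Type*} [DecidableEq β] {f : α → β}

variable (f) in
def NoSingletonFiber (s : Finset α) : Prop :=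
  ∀ b, #{a ∈ s | f a = b} ≠ 1

/-- The finset analogue of full spectrum: once `t` is recoloured with fresh colours, the uniquely
coloured elements are exactly those of `t`. -/
def FullRemovalSpectrum [DecidableEq α] (f : α → β) (s : Finset α) : Prop :=
  ∀ k ≤ #s, k ≠ #s - 1 → ∃ t ⊆ s, #t = k ∧ NoSingletonFiber f (s \ t)

lemma NoSingletonFiber.exists_ne_eq {s : Finset α} (hs : NoSingletonFiber f s) {a : α}
    (ha : a ∈ s) : ∃ a' ∈ s, a' ≠ a ∧ f a' = f a := by
  have hpos : 0 < #{x ∈ s | f x = f a} := card_pos.2 ⟨a, mem_filter.2 ⟨ha, rfl⟩⟩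
  have hlt : 1 < #{x ∈ s | f x = f a} := by have := hs (f a); omega
  obtain ⟨a', ha', hne⟩ := exists_mem_ne hlt a
  exact ⟨a', (mem_filter.1 ha').1, hne, (mem_filter.1 ha').2⟩

lemma NoSingletonFiber.filter {s : Finset α} (hs : NoSingletonFiber f s) (p : β → Prop)
    [DecidablePred p] : NoSingletonFiber f {a ∈ s | p (f a)} := by
  intro b
  rw [filter_filter]
  by_cases hb : p b
  · rw [filter_congr fun a _ => and_iff_right_of_imp fun (h : f a = b) => h ▸ hb]
    exact hs b
  · rw [filter_false_of_mem fun a _ (h : p (f a) ∧ f a = b) => hb (h.2 ▸ h.1)]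
    simp

lemma NoSingletonFiber.union [DecidableEq α] {s t : Finset α} (hs : NoSingletonFiber f s)
    (ht : NoSingletonFiber f t) (hst : ∀ a ∈ s, ∀ a' ∈ t, f a ≠ f a') :
    NoSingletonFiber f (s ∪ t) := by
  intro b
  rw [filter_union]
  by_cases hb : ∃ a ∈ s, f a = b
  · obtain ⟨a, ha, rfl⟩ := hb
    rw [filter_false_of_mem fun a' ha' h => hst a ha a' ha' h.symm, union_empty]
    exact hs _
  · push Not at hb
    rw [filter_false_of_mem hb, empty_union]
    exact ht b

lemma noSingletonFiber_of_forall_eq {s : Finset α} {b : β} (hs : ∀ a ∈ s, f a = b)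
    (hcard : #s ≠ 1) : NoSingletonFiber f s := by
  intro b'
  by_cases hb : b = b'
  · subst hb
    rwa [filter_true_of_mem hs]
  · rw [filter_false_of_mem fun a ha h => hb (hs a ha ▸ h)]
    simp

lemma fullRemovalSpectrum_of_forall_eq [DecidableEq α] {s : Finset α} {b : β}
    (hs : ∀ a ∈ s, f a = b) : FullRemovalSpectrum f s := by
  intro k hk hk'
  obtain ⟨t, hts, rfl⟩ := exists_subset_card_eq hk
  refine ⟨t, hts, rfl, noSingletonFiber_of_forall_eq (fun a ha => hs a (mem_sdiff.1 ha).1) ?_⟩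
  rw [card_sdiff_of_subset hts]
  omega

lemma exists_add_eq_of_ne_sub_one {m n k : ℕ} (hm : 3 ≤ m) (hn : 2 ≤ n) (hk : k ≤ m + n)
    (hk' : k ≠ m + n - 1) : ∃ i j, i ≤ m ∧ i ≠ m - 1 ∧ j ≤ n ∧ j ≠ n - 1 ∧ k = i + j := by
  by_cases hsmall : k ≤ m - 2
  · exact ⟨k, 0, by omega, by omega, by omega, by omega, by omega⟩
  by_cases hgap : k = m - 1
  · by_cases hn3 : 3 ≤ n
    · exact ⟨m - 2, 1, by omega, by omega, by omega, by omega, by omega⟩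
    · exact ⟨m - 3, 2, by omega, by omega, by omega, by omega, by omega⟩
  · exact ⟨m, k - m, by omega, by omega, by omega, by omega, by omega⟩

lemma FullRemovalSpectrum.union [DecidableEq α] {s t : Finset α} (hs : FullRemovalSpectrum f s)
    (ht : FullRemovalSpectrum f t) (hs3 : 3 ≤ #s) (ht2 : 2 ≤ #t)
    (hst : ∀ a ∈ s, ∀ a' ∈ t, f a ≠ f a') : FullRemovalSpectrum f (s ∪ t) := by
  have hdisj : Disjoint s t := disjoint_left.2 fun a ha hat => hst a ha a hat rfl
  intro k hk hk'
  rw [card_union_of_disjoint hdisj] at hk hk'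
  obtain ⟨i, j, hi, hi', hj, hj', rfl⟩ := exists_add_eq_of_ne_sub_one hs3 ht2 hk hk'
  obtain ⟨u, hus, rfl, hu⟩ := hs i hi hi'
  obtain ⟨v, hvt, rfl, hv⟩ := ht j hj hj'
  refine ⟨u ∪ v, union_subset_union hus hvt,
    card_union_of_disjoint (hdisj.mono hus hvt), ?_⟩
  have hsdiff : (s ∪ t) \ (u ∪ v) = (s \ u) ∪ (t \ v) := by
    ext a
    have : a ∈ s → a ∉ t := fun h => disjoint_left.1 hdisj h
    grind
  rw [hsdiff]
  exact hu.union hv fun a ha a' ha' => hst a (mem_sdiff.1 ha).1 a' (mem_sdiff.1 ha').1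

/-- Peel off the fibres other than the big one, one at a time. -/
theorem NoSingletonFiber.fullRemovalSpectrum [DecidableEq α] {s : Finset α}
    (hs : NoSingletonFiber f s) {b : β} (hb : 3 ≤ #{a ∈ s | f a = b}) :
    FullRemovalSpectrum f s := by
  induction s using Finset.strongInduction with
  | H s ih =>
  by_cases hmono : ∀ a ∈ s, f a = b
  · exact fullRemovalSpectrum_of_forall_eq hmono
  push Not at hmono
  obtain ⟨a₀, ha₀, hne⟩ := hmono
  set s' := {a ∈ s | f a ≠ f a₀}
  set t := {a ∈ s | f a = f a₀}
  have hb' : #{a ∈ s' | f a = b} = #{a ∈ s | f a = b} := by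
    rw [filter_filter]
    congr 1
    exact filter_congr fun a _ => ⟨fun h => h.2, fun h => ⟨h ▸ hne.symm, h⟩⟩
  have hs' : FullRemovalSpectrum f s' :=
    ih s' (filter_ssubset.2 ⟨a₀, ha₀, not_not.2 rfl⟩) (hs.filter (· ≠ f a₀)) (hb' ▸ hb)
  have ht2 : 2 ≤ #t := by
    have : #t ≠ 1 := hs (f a₀)
    have : 0 < #t := card_pos.2 ⟨a₀, mem_filter.2 ⟨ha₀, rfl⟩⟩
    omega
  rw [← filter_union_filter_not_eq (fun a => f a = f a₀) s, union_comm]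
  refine hs'.union (fullRemovalSpectrum_of_forall_eq fun a ha => (mem_filter.1 ha).2)
    ((hb' ▸ hb).trans (card_filter_le _ _)) ht2 fun a ha a' ha' h => ?_
  exact (mem_filter.1 ha).2 (h.trans (mem_filter.1 ha').2)

end Fibers

section EdgeColoring

variable {V : Type*} (F : SimpleGraph V)

lemma uniqueEdges_subset_edgeSet (c : Sym2 V → ℕ) : uniqueEdges F c ⊆ F.edgeSet :=
  fun _ he => he.1

/-- A non-unique edge shares its colour with another edge, which is then non-unique too. -/
lemma ncard_edgeSet_ne_ncard_uniqueEdges_add_one [Finite V] (c : Sym2 V → ℕ) :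
    F.edgeSet.ncard ≠ (uniqueEdges F c).ncard + 1 := by
  intro h
  have hsub := uniqueEdges_subset_edgeSet F c
  have hrest : (F.edgeSet \ uniqueEdges F c).ncard = 1 := by
    have := Set.ncard_sdiff_add_ncard_of_subset hsub
    omega
  obtain ⟨e, he⟩ := Set.ncard_eq_one.1 hrest
  have heE : e ∈ F.edgeSet \ uniqueEdges F c := he ▸ rfl
  obtain ⟨e', he'E, hce, hne⟩ : ∃ e' ∈ F.edgeSet, c e' = c e ∧ e' ≠ e := by
    by_contra! hcon
    exact heE.2 ⟨heE.1, hcon⟩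
  have he' : e' ∈ F.edgeSet \ uniqueEdges F c :=
    ⟨he'E, fun hu => hne.symm (hu.2 e heE.1 hce.symm)⟩
  rw [he] at he'
  exact hne he'

lemma spec_subset [Finite V] (hF : F.edgeSet.Nonempty) :
    Spec F ⊆ {k | k ≤ F.edgeSet.ncard ∧ k ≠ F.edgeSet.ncard - 1} := by
  rintro _ ⟨c, -, rfl⟩
  have hne := ncard_edgeSet_ne_ncard_uniqueEdges_add_one F c
  have hle := Set.ncard_le_ncard (uniqueEdges_subset_edgeSet F c)
  have hpos := hF.ncard_pos
  exact ⟨hle, by omega⟩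

lemma ncard_sep_edgeSet [Fintype F.edgeSet] (p : Sym2 V → Prop) [DecidablePred p] :
    {e ∈ F.edgeSet | p e}.ncard = #{e ∈ F.edgeFinset | p e} := by
  rw [← Set.ncard_coe_finset, coe_filter]
  simp only [mem_edgeFinset]

lemma exists_isProperEdgeColoring_uniqueEdges_eq [Countable V] [DecidableEq V] [Fintype F.edgeSet]
    {c : Sym2 V → ℕ} (hc : IsProperEdgeColoring F c) {S : Finset (Sym2 V)}
    (hS : S ⊆ F.edgeFinset) (hrest : NoSingletonFiber c (F.edgeFinset \ S)) :
    ∃ c' : Sym2 V → ℕ, IsProperEdgeColoring F c' ∧ uniqueEdges F c' = S := by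
  obtain ⟨g, hg⟩ := exists_injective_nat (Sym2 V)
  -- odd colours are fresh and pairwise distinct on `S`, even ones copy `c` off `S`
  let c' e := if e ∈ S then 2 * g e + 1 else 2 * c e
  have hc'_inj : ∀ e₁ e₂, c' e₁ = c' e₂ → e₁ ∈ S ∨ e₂ ∈ S → e₁ = e₂ := by
    intro e₁ e₂ h hmem
    simp only [c'] at h
    split_ifs at h with h₁ h₂ h₂ <;> first | exact hg (by omega) | omega | tauto
  refine ⟨c', fun e₁ h₁ e₂ h₂ hne hv h => ?_, Set.ext fun e => ⟨fun ⟨heE, hu⟩ => ?_,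
    fun heS => ⟨mem_edgeFinset.1 (hS heS), fun e' _ h => hc'_inj _ _ h (Or.inr heS)⟩⟩⟩
  · by_cases hmem : e₁ ∈ S ∨ e₂ ∈ S
    · exact hne (hc'_inj _ _ h hmem)
    · push Not at hmem
      simp only [c', if_neg hmem.1, if_neg hmem.2] at h
      exact hc e₁ h₁ e₂ h₂ hne hv (by omega)
  · by_contra heS
    rw [mem_coe] at heS
    obtain ⟨e', he', hne, hce⟩ :=
      hrest.exists_ne_eq (mem_sdiff.2 ⟨mem_edgeFinset.2 heE, heS⟩)
    obtain ⟨he'E, he'S⟩ := mem_sdiff.1 he'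
    exact hne (hu e' (mem_edgeFinset.1 he'E) (by simp only [c', if_neg heS, if_neg he'S, hce]))

end EdgeColoring

/-- If `F` admits a proper edge coloring in which every (nonempty) color
class has at least 2 edges and some color class has at least 3 edges, then `F` has
full spectrum `{0, 1, …, ‖F‖−2} ∪ {‖F‖}`. -/
theorem full_spectrum_of_coloring {V : Type*} [Fintype V] (F : SimpleGraph V)
    (c : Sym2 V → ℕ) (hc : IsProperEdgeColoring F c)
    (hall : ∀ k : ℕ, (∃ e ∈ F.edgeSet, c e = k) →
      2 ≤ {e ∈ F.edgeSet | c e = k}.ncard)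
    (hbig : ∃ k : ℕ, 3 ≤ {e ∈ F.edgeSet | c e = k}.ncard) :
    Spec F = {k : ℕ | k ≤ F.edgeSet.ncard ∧ k ≠ F.edgeSet.ncard - 1} := by
  classical
  have hclass b : {e ∈ F.edgeSet | c e = b}.ncard = #{e ∈ F.edgeFinset | c e = b} :=
    ncard_sep_edgeSet F _
  have hfibers : NoSingletonFiber c F.edgeFinset := fun b h => by
    obtain ⟨e, he⟩ := card_eq_one.1 h
    have heb := mem_filter.1 (he ▸ mem_singleton_self e)
    have := hclass b ▸ hall b ⟨e, mem_edgeFinset.1 heb.1, heb.2⟩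
    omega
  obtain ⟨b, hb⟩ := hbig
  have hF : F.edgeSet.Nonempty :=
    (Set.nonempty_of_ncard_ne_zero (s := {e ∈ F.edgeSet | c e = b}) (by omega)).mono
      fun _ he => he.1
  refine (spec_subset F hF).antisymm fun k ⟨hk, hk'⟩ => ?_
  rw [Set.ncard_eq_toFinset_card'] at hk hk'
  obtain ⟨S, hS, rfl, hrest⟩ :=
    hfibers.fullRemovalSpectrum (hclass b ▸ hb) k hk hk'
  obtain ⟨c', hc', hu⟩ := exists_isProperEdgeColoring_uniqueEdges_eq F hc hS hrest
  exact ⟨c', hc', by rw [hu, Set.ncard_coe_finset]⟩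
end

section
/- For the short cycles one has Spec(C_3) = {3}, Spec(C_4) = {0, 2, 4}, and Spec(C_5) = {1, 3, 5}; that is, for each n ∈ {3,4,5} and each natural number k, the cycle C_n admits a proper edge coloring with exactly k uniquely colored edges if and only if k lies in the indicated set. -/
/-!
A colour class of a proper edge colouring is a matching. Any two edges of `C₃` meet, so every
proper colouring of `C₃` is rainbow. `C₄` and `C₅` have no three pairwise disjoint edges, so
every colour class has at most two edges; the non-unique edges therefore come in pairs and
`n - k` is even. The remaining values of `k` are realised by explicit colourings.
-/

open SimpleGraph

open Finset

section EdgeColoring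

def NoTwoDisjointEdges {V : Type*} (G : SimpleGraph V) : Prop :=
  ∀ e₁ ∈ G.edgeSet, ∀ e₂ ∈ G.edgeSet, ∃ v, v ∈ e₁ ∧ v ∈ e₂

def NoThreePairwiseDisjointEdges {V : Type*} (G : SimpleGraph V) : Prop :=
  ∀ e₁ ∈ G.edgeSet, ∀ e₂ ∈ G.edgeSet, ∀ e₃ ∈ G.edgeSet,
    e₁ ≠ e₂ → e₁ ≠ e₃ → e₂ ≠ e₃ →
    (∃ v, v ∈ e₁ ∧ v ∈ e₂) ∨ (∃ v, v ∈ e₁ ∧ v ∈ e₃) ∨ (∃ v, v ∈ e₂ ∧ v ∈ e₃)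

variable {V : Type*} {G : SimpleGraph V} {c : Sym2 V → ℕ}

lemma IsProperEdgeColoring.eq_of_color_eq (hc : IsProperEdgeColoring G c)
    {e₁ e₂ : Sym2 V} (h₁ : e₁ ∈ G.edgeSet) (h₂ : e₂ ∈ G.edgeSet) (hcol : c e₁ = c e₂)
    (hmeet : ∃ v, v ∈ e₁ ∧ v ∈ e₂) : e₁ = e₂ := by
  by_contra hne
  exact hc e₁ h₁ e₂ h₂ hne hmeet hcol

lemma uniqueEdges_eq_edgeSet_of_injOn (hc : Set.InjOn c G.edgeSet) :
    uniqueEdges G c = G.edgeSet :=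
  Set.eq_of_subset_of_subset (fun _ he => he.1) fun _ he => ⟨he, fun _ he' hcol => hc he' he hcol⟩

lemma IsProperEdgeColoring.injOn_of_noTwoDisjointEdges (hc : IsProperEdgeColoring G c)
    (hG : NoTwoDisjointEdges G) :
    Set.InjOn c G.edgeSet :=
  fun _ h₁ _ h₂ hcol => hc.eq_of_color_eq h₁ h₂ hcol (hG _ h₁ _ h₂)

lemma IsProperEdgeColoring.eq_or_eq_or_eq_of_color_eq (hc : IsProperEdgeColoring G c)
    (hG : NoThreePairwiseDisjointEdges G)
    {e₁ e₂ e₃ : Sym2 V} (h₁ : e₁ ∈ G.edgeSet) (h₂ : e₂ ∈ G.edgeSet) (h₃ : e₃ ∈ G.edgeSet)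
    (h₁₂ : c e₁ = c e₂) (h₁₃ : c e₁ = c e₃) : e₁ = e₂ ∨ e₁ = e₃ ∨ e₂ = e₃ := by
  by_contra! hne
  obtain ⟨n₁₂, n₁₃, n₂₃⟩ := hne
  rcases hG e₁ h₁ e₂ h₂ e₃ h₃ n₁₂ n₁₃ n₂₃ with hm | hm | hm
  · exact n₁₂ (hc.eq_of_color_eq h₁ h₂ h₁₂ hm)
  · exact n₁₃ (hc.eq_of_color_eq h₁ h₃ h₁₃ hm)
  · exact n₂₃ (hc.eq_of_color_eq h₂ h₃ (h₁₂ ▸ h₁₃) hm)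

variable [Fintype G.edgeSet]

lemma card_edgeFinset_mem_Spec [Countable V] : #G.edgeFinset ∈ Spec G := by
  obtain ⟨c, hc⟩ := Countable.exists_injective_nat (Sym2 V)
  refine ⟨c, fun _ _ _ _ hne _ => hc.ne hne, ?_⟩
  rw [uniqueEdges_eq_edgeSet_of_injOn hc.injOn, ← coe_edgeFinset, Set.ncard_coe_finset]

lemma Spec_eq_singleton_of_noTwoDisjointEdges [Countable V]
    (hG : NoTwoDisjointEdges G) :
    Spec G = {#G.edgeFinset} := by
  refine Set.eq_singleton_iff_unique_mem.2 ⟨card_edgeFinset_mem_Spec, ?_⟩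
  rintro _ ⟨c, hc, rfl⟩
  rw [uniqueEdges_eq_edgeSet_of_injOn (hc.injOn_of_noTwoDisjointEdges hG), ← coe_edgeFinset,
    Set.ncard_coe_finset]

variable [DecidableEq V]

lemma uniqueEdges_eq_coe_filter :
    uniqueEdges G c =
      ↑(G.edgeFinset.filter fun e => ∀ e' ∈ G.edgeFinset, c e' = c e → e' = e) := by
  ext e
  simp [uniqueEdges]

/-- The non-unique edges split into colour classes of size exactly two. -/
lemma even_card_edgeFinset_sub_ncard_uniqueEdges
    (hc : ∀ e₁ ∈ G.edgeSet, ∀ e₂ ∈ G.edgeSet, ∀ e₃ ∈ G.edgeSet,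
      c e₁ = c e₂ → c e₁ = c e₃ → e₁ = e₂ ∨ e₁ = e₃ ∨ e₂ = e₃) :
    Even (#G.edgeFinset - (uniqueEdges G c).ncard) := by
  set E := G.edgeFinset
  set N := E.filter fun e => ¬∀ e' ∈ E, c e' = c e → e' = e
  have hN : #E - (uniqueEdges G c).ncard = #N := by
    rw [uniqueEdges_eq_coe_filter, Set.ncard_coe_finset, ← Finset.card_filter_add_card_filter_not
      (s := E) (fun e => ∀ e' ∈ E, c e' = c e → e' = e), Nat.add_sub_cancel_left]
  have mem_N : ∀ e, e ∈ N ↔ e ∈ E ∧ ∃ e' ∈ E, c e' = c e ∧ e' ≠ e := by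
    simp [N]
  have hfiber : ∀ col ∈ N.image c, #(N.filter (c · = col)) = 2 := by
    simp only [Finset.mem_image]
    rintro _ ⟨e, he, rfl⟩
    obtain ⟨he, e', he', hcol, hne⟩ := (mem_N e).1 he
    refine le_antisymm (not_lt.1 fun h => ?_) (Finset.one_lt_card.2 ⟨e, ?_, e', ?_, hne.symm⟩)
    · obtain ⟨a, b, d, ha, hb, hd, hab, had, hbd⟩ := Finset.two_lt_card_iff.1 h
      simp only [Finset.mem_filter, mem_N, E, mem_edgeFinset] at ha hb hd
      rcases hc a ha.1.1 b hb.1.1 d hd.1.1 (ha.2.trans hb.2.symm) (ha.2.trans hd.2.symm)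
        with h | h | h <;> contradiction
    · exact Finset.mem_filter.2 ⟨(mem_N e).2 ⟨he, e', he', hcol, hne⟩, rfl⟩
    · exact Finset.mem_filter.2 ⟨(mem_N e').2 ⟨he', e, he, hcol.symm, hne.symm⟩, hcol⟩
  rw [hN, Finset.card_eq_sum_card_image c N]
  exact Finset.even_sum _ fun col hcol => hfiber col hcol ▸ even_two

lemma ncard_uniqueEdges_le :
    (uniqueEdges G c).ncard ≤ #G.edgeFinset := by
  rw [uniqueEdges_eq_coe_filter, Set.ncard_coe_finset]
  exact Finset.card_filter_le _ _

lemma mem_Spec_of_card_filter {k : ℕ} (hc : IsProperEdgeColoring G c)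
    (hk : #(G.edgeFinset.filter fun e => ∀ e' ∈ G.edgeFinset, c e' = c e → e' = e) = k) :
    k ∈ Spec G :=
  ⟨c, hc, by rw [uniqueEdges_eq_coe_filter, Set.ncard_coe_finset, hk]⟩

lemma Spec_subset_of_noThreePairwiseDisjointEdges
    (hG : NoThreePairwiseDisjointEdges G) :
    Spec G ⊆ {k | k ≤ #G.edgeFinset ∧ Even (#G.edgeFinset - k)} := by
  rintro _ ⟨c, hc, rfl⟩
  exact ⟨ncard_uniqueEdges_le, even_card_edgeFinset_sub_ncard_uniqueEdges
    fun _ h₁ _ h₂ _ h₃ => hc.eq_or_eq_or_eq_of_color_eq hG h₁ h₂ h₃⟩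

end EdgeColoring

lemma Spec_cycleGraph_three : Spec (cycleGraph 3) = {3} := by
  rw [Spec_eq_singleton_of_noTwoDisjointEdges (by unfold NoTwoDisjointEdges; decide)]
  rfl

lemma Spec_cycleGraph_four : Spec (cycleGraph 4) = {0, 2, 4} := by
  refine Set.Subset.antisymm (fun k hk => ?_) ?_
  · obtain ⟨hle, heven⟩ := Spec_subset_of_noThreePairwiseDisjointEdges
      (by unfold NoThreePairwiseDisjointEdges; decide) hk
    have hcard : #(cycleGraph 4).edgeFinset = 4 := by decide
    rw [hcard] at hle heven
    rw [Nat.even_iff] at heven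
    simp only [Set.mem_insert_iff, Set.mem_singleton_iff]
    omega
  · simp only [Set.insert_subset_iff, Set.singleton_subset_iff]
    refine ⟨mem_Spec_of_card_filter (c := fun e => if e = s(0,1) ∨ e = s(2,3) then 0 else 1)
        (by unfold IsProperEdgeColoring; decide) (by decide),
      mem_Spec_of_card_filter
        (c := fun e => if e = s(0,1) ∨ e = s(2,3) then 0 else if e = s(1,2) then 1 else 2)
        (by unfold IsProperEdgeColoring; decide) (by decide), ?_⟩
    exact card_edgeFinset_mem_Spec

lemma Spec_cycleGraph_five : Spec (cycleGraph 5) = {1, 3, 5} := by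
  refine Set.Subset.antisymm (fun k hk => ?_) ?_
  · obtain ⟨hle, heven⟩ := Spec_subset_of_noThreePairwiseDisjointEdges
      (by unfold NoThreePairwiseDisjointEdges; decide) hk
    have hcard : #(cycleGraph 5).edgeFinset = 5 := by decide
    rw [hcard] at hle heven
    rw [Nat.even_iff] at heven
    simp only [Set.mem_insert_iff, Set.mem_singleton_iff]
    omega
  · simp only [Set.insert_subset_iff, Set.singleton_subset_iff]
    refine ⟨mem_Spec_of_card_filter
        (c := fun e => if e = s(0,1) ∨ e = s(2,3) then 0 else
          if e = s(1,2) ∨ e = s(3,4) then 1 else 2)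
        (by unfold IsProperEdgeColoring; decide) (by decide),
      mem_Spec_of_card_filter
        (c := fun e => if e = s(0,1) ∨ e = s(2,3) then 0 else if e = s(1,2) then 1 else
          if e = s(3,4) then 2 else 3)
        (by unfold IsProperEdgeColoring; decide) (by decide), ?_⟩
    exact card_edgeFinset_mem_Spec

/-- `Spec(C₃) = {3}`, `Spec(C₄) = {0,2,4}`, `Spec(C₅) = {1,3,5}`. -/
theorem short_cycle_spectrum :
    Spec (SimpleGraph.cycleGraph 3) = {3} ∧
    Spec (SimpleGraph.cycleGraph 4) = {0, 2, 4} ∧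
    Spec (SimpleGraph.cycleGraph 5) = {1, 3, 5} :=
  ⟨Spec_cycleGraph_three, Spec_cycleGraph_four, Spec_cycleGraph_five⟩
end

section
/- For the short paths one has Spec(P_1) = {1}, Spec(P_2) = {2}, Spec(P_3) = {1, 3}, and Spec(P_4) = {0, 2, 4}; that is, for each k ∈ {1,2,3,4} and each natural number κ, the path P_k with k edges admits a proper edge coloring with exactly κ uniquely colored edges if and only if κ lies in the indicated set. -/
open SimpleGraph

/-!
Reading the colors along the path turns a proper edge coloring of `P_n` into a sequence of
length `n` whose consecutive terms differ, with the uniquely colored edges becoming the positions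
whose value occurs nowhere else. Three pairwise non-consecutive positions exist only when `n ≥ 5`,
so for `n ≤ 4` every value occurs at most twice: the repeated positions pair off and the number of
unique positions has the parity of `n`. For `n ≤ 2` no value repeats at all. The sequences `0`,
`01`, `010`, `012`, `0101`, `0102`, `0123` realize all remaining values.
-/

open Finset

section UniqueIndices

variable {ι α : Type*} [Fintype ι] [DecidableEq ι] [DecidableEq α]

def uniqueIndices (a : ι → α) : Finset ι := {i | ∀ j, a j = a i → j = i}

theorem mem_uniqueIndices {a : ι → α} {i : ι} :
    i ∈ uniqueIndices a ↔ ∀ j, a j = a i → j = i := by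
  simp [uniqueIndices]

theorem uniqueIndices_eq_univ {a : ι → α} (ha : a.Injective) : uniqueIndices a = univ :=
  eq_univ_of_forall fun _ => mem_uniqueIndices.2 fun _ h => ha h

/-- Sending each repeated index to the other index with its value is an involution whose fixed
points are exactly the unique indices. -/
theorem card_uniqueIndices_modEq_two {a : ι → α}
    (ha : ∀ i j k, a i = a j → a j = a k → i = j ∨ j = k ∨ i = k) :
    #(uniqueIndices a) ≡ Fintype.card ι [MOD 2] := by
  classical
  let partner : ι → ι := fun i => if h : ∃ j ≠ i, a j = a i then h.choose else i
  have partner_val (i) : a (partner i) = a i := by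
    by_cases h : ∃ j ≠ i, a j = a i
    · simpa [partner, h] using h.choose_spec.2
    · simp [partner, h]
  have partner_eq_self (i) : partner i = i ↔ i ∈ uniqueIndices a := by
    rw [mem_uniqueIndices]
    by_cases h : ∃ j ≠ i, a j = a i
    · rw [show partner i = h.choose from dif_pos h]
      refine iff_of_false h.choose_spec.1 fun hu => ?_
      obtain ⟨j, hji, hj⟩ := h
      exact hji (hu j hj)
    · rw [show partner i = i from dif_neg h]
      exact iff_of_true rfl fun j hj => by_contra fun hji => h ⟨j, hji, hj⟩
  have partner_involutive : Function.Involutive partner := by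
    intro i
    by_cases hi : partner i = i
    · rw [hi, hi]
    rcases ha _ _ _ (partner_val (partner i)) (partner_val i) with h | h | h
    · exact absurd (mem_uniqueIndices.1 ((partner_eq_self _).1 h) i (partner_val i).symm).symm hi
    · exact absurd h hi
    · exact h
  let σ := partner_involutive.toPerm
  have hσ : σ ^ 2 ^ 1 = 1 := Equiv.ext partner_involutive
  have hfix : σ.supportᶜ = uniqueIndices a := by
    ext i
    simp [σ, Equiv.Perm.mem_support, partner_eq_self]
  rw [← hfix]
  exact Equiv.Perm.card_compl_support_modEq (p := 2) hσ

end UniqueIndices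

section EdgeEnumeration

variable {V ι : Type*} {F : SimpleGraph V} {f : ι → Sym2 V}

theorem isProperEdgeColoring_iff_of_edgeSet_eq_range (hf : f.Injective)
    (hF : F.edgeSet = Set.range f) (c : Sym2 V → ℕ) :
    IsProperEdgeColoring F c ↔
      ∀ i j, i ≠ j → (∃ v, v ∈ f i ∧ v ∈ f j) → c (f i) ≠ c (f j) := by
  simp only [IsProperEdgeColoring, hF, Set.forall_mem_range, hf.ne_iff]

theorem ncard_uniqueEdges_of_edgeSet_eq_range [Fintype ι] [DecidableEq ι] (hf : f.Injective)
    (hF : F.edgeSet = Set.range f) (c : Sym2 V → ℕ) :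
    (uniqueEdges F c).ncard = #(uniqueIndices (c ∘ f)) := by
  have : uniqueEdges F c = f '' uniqueIndices (c ∘ f) := by
    ext e
    simp only [uniqueEdges, hF, Set.forall_mem_range, Set.mem_ofPred_eq, Set.mem_image,
      Finset.mem_coe, mem_uniqueIndices, Function.comp_apply]
    constructor
    · rintro ⟨⟨i, rfl⟩, hi⟩
      exact ⟨i, fun j hj => hf (hi j hj), rfl⟩
    · rintro ⟨i, hi, rfl⟩
      exact ⟨⟨i, rfl⟩, fun j hj => congrArg f (hi j hj)⟩
  rw [this, Set.ncard_image_of_injective _ hf, Set.ncard_coe_finset]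

end EdgeEnumeration

section PathGraph

variable {n : ℕ}

def pathEdge (n : ℕ) (i : Fin n) : Sym2 (Fin (n + 1)) := s(i.castSucc, i.succ)

theorem pathEdge_injective (n : ℕ) : (pathEdge n).Injective := by
  intro i j h
  simp only [pathEdge, Sym2.eq_iff, Fin.ext_iff, Fin.val_castSucc, Fin.val_succ] at h
  ext; omega

theorem edgeSet_pathGraph (n : ℕ) : (pathGraph (n + 1)).edgeSet = Set.range (pathEdge n) := by
  ext e
  induction e using Sym2.ind with
  | _ u v =>
    simp only [mem_edgeSet, pathGraph_adj, Set.mem_range, pathEdge, Sym2.eq_iff, Fin.ext_iff,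
      Fin.val_castSucc, Fin.val_succ]
    constructor
    · rintro (h | h)
      · exact ⟨⟨u, by omega⟩, .inl ⟨rfl, h⟩⟩
      · exact ⟨⟨v, by omega⟩, .inr ⟨rfl, h⟩⟩
    · rintro ⟨i, h⟩
      omega

theorem pathEdge_share_vertex_iff {i j : Fin n} (hij : i ≠ j) :
    (∃ v, v ∈ pathEdge n i ∧ v ∈ pathEdge n j) ↔ (i : ℕ) + 1 = j ∨ (j : ℕ) + 1 = i := by
  simp only [pathEdge, Sym2.mem_iff, Fin.ext_iff, Fin.val_castSucc, Fin.val_succ]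
  rw [Ne, Fin.ext_iff] at hij
  constructor
  · rintro ⟨v, hv, hv'⟩
    omega
  · rintro (h | h)
    · exact ⟨j.castSucc, .inr h.symm, .inl rfl⟩
    · exact ⟨i.castSucc, .inl rfl, .inr h.symm⟩

theorem isProperEdgeColoring_pathGraph_iff (c : Sym2 (Fin (n + 1)) → ℕ) :
    IsProperEdgeColoring (pathGraph (n + 1)) c ↔
      ∀ i j : Fin n, (i : ℕ) + 1 = j → c (pathEdge n i) ≠ c (pathEdge n j) := by
  rw [isProperEdgeColoring_iff_of_edgeSet_eq_range (pathEdge_injective n) (edgeSet_pathGraph n)]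
  constructor
  · intro hc i j hij
    have hne : i ≠ j := fun h => by rw [h] at hij; omega
    exact hc i j hne ((pathEdge_share_vertex_iff hne).2 (.inl hij))
  · intro hc i j hij hv
    rcases (pathEdge_share_vertex_iff hij).1 hv with h | h
    exacts [hc i j h, (hc j i h).symm]

theorem mem_spec_pathGraph_iff {k : ℕ} :
    k ∈ Spec (pathGraph (n + 1)) ↔
      ∃ a : Fin n → ℕ, (∀ i j : Fin n, (i : ℕ) + 1 = j → a i ≠ a j) ∧
        #(uniqueIndices a) = k := by
  have hinj := pathEdge_injective n
  have hF := edgeSet_pathGraph n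
  constructor
  · rintro ⟨c, hc, rfl⟩
    exact ⟨c ∘ pathEdge n, (isProperEdgeColoring_pathGraph_iff c).1 hc,
      (ncard_uniqueEdges_of_edgeSet_eq_range hinj hF c).symm⟩
  · rintro ⟨a, ha, rfl⟩
    refine ⟨Function.extend (pathEdge n) a 0, ?_, ?_⟩
    · simpa only [isProperEdgeColoring_pathGraph_iff, hinj.extend_apply] using ha
    · rw [ncard_uniqueEdges_of_edgeSet_eq_range hinj hF, Function.extend_comp hinj]

end PathGraph

section ShortPaths

variable {n : ℕ} {a : Fin n → ℕ}

theorem injective_of_consecutive_ne (hn : n ≤ 2)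
    (ha : ∀ i j : Fin n, (i : ℕ) + 1 = j → a i ≠ a j) : a.Injective := by
  intro i j hij
  by_contra hne
  rcases Nat.lt_or_gt_of_ne (Fin.val_ne_of_ne hne) with h | h
  · exact ha i j (by omega) hij
  · exact ha j i (by omega) hij.symm

theorem eq_or_eq_or_eq_of_consecutive_ne (hn : n ≤ 4)
    (ha : ∀ i j : Fin n, (i : ℕ) + 1 = j → a i ≠ a j) {i j k : Fin n}
    (hij : a i = a j) (hjk : a j = a k) : i = j ∨ j = k ∨ i = k := by
  have apart {p q : Fin n} (hpq : a p = a q) : (p : ℕ) + 1 ≠ q ∧ (q : ℕ) + 1 ≠ p :=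
    ⟨fun h => ha p q h hpq, fun h => ha q p h hpq.symm⟩
  have := apart hij
  have := apart hjk
  have := apart (hij.trans hjk)
  simp only [Fin.ext_iff]
  omega

theorem spec_pathGraph_subset_singleton (hn : n ≤ 2) : Spec (pathGraph (n + 1)) ⊆ {n} := by
  intro k hk
  obtain ⟨a, ha, rfl⟩ := mem_spec_pathGraph_iff.1 hk
  simp [uniqueIndices_eq_univ (injective_of_consecutive_ne hn ha)]

theorem spec_pathGraph_subset_parity (hn : n ≤ 4) :
    Spec (pathGraph (n + 1)) ⊆ {k | k ≤ n ∧ k % 2 = n % 2} := by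
  intro k hk
  obtain ⟨a, ha, rfl⟩ := mem_spec_pathGraph_iff.1 hk
  have hmod := card_uniqueIndices_modEq_two fun _ _ _ => eq_or_eq_or_eq_of_consecutive_ne hn ha
  rw [Fintype.card_fin] at hmod
  exact ⟨(card_le_univ _).trans_eq (Fintype.card_fin n), hmod⟩

end ShortPaths

/-- `Spec(P₁) = {1}`, `Spec(P₂) = {2}`, `Spec(P₃) = {1,3}`,
`Spec(P₄) = {0,2,4}`, where `P_k` has `k` edges, i.e. `k+1` vertices. -/
theorem short_path_spectrum :
    Spec (SimpleGraph.pathGraph 2) = {1} ∧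
    Spec (SimpleGraph.pathGraph 3) = {2} ∧
    Spec (SimpleGraph.pathGraph 4) = {1, 3} ∧
    Spec (SimpleGraph.pathGraph 5) = {0, 2, 4} := by
  refine ⟨?_, ?_, ?_, ?_⟩
  · refine (spec_pathGraph_subset_singleton (by norm_num)).antisymm ?_
    rintro _ rfl
    exact mem_spec_pathGraph_iff.2 ⟨![0], by decide, by decide⟩
  · refine (spec_pathGraph_subset_singleton (by norm_num)).antisymm ?_
    rintro _ rfl
    exact mem_spec_pathGraph_iff.2 ⟨![0, 1], by decide, by decide⟩
  · refine Set.Subset.antisymm (fun k hk => ?_) ?_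
    · have := spec_pathGraph_subset_parity (by norm_num) hk
      simp only [Set.mem_ofPred_eq, Set.mem_insert_iff, Set.mem_singleton_iff] at this ⊢
      omega
    · rintro _ (rfl | rfl)
      exacts [mem_spec_pathGraph_iff.2 ⟨![0, 1, 0], by decide, by decide⟩,
        mem_spec_pathGraph_iff.2 ⟨![0, 1, 2], by decide, by decide⟩]
  · refine Set.Subset.antisymm (fun k hk => ?_) ?_
    · have := spec_pathGraph_subset_parity (by norm_num) hk
      simp only [Set.mem_ofPred_eq, Set.mem_insert_iff, Set.mem_singleton_iff] at this ⊢
      omega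
    · rintro _ (rfl | rfl | rfl)
      exacts [mem_spec_pathGraph_iff.2 ⟨![0, 1, 0, 1], by decide, by decide⟩,
        mem_spec_pathGraph_iff.2 ⟨![0, 1, 0, 2], by decide, by decide⟩,
        mem_spec_pathGraph_iff.2 ⟨![0, 1, 2, 3], by decide, by decide⟩]
end

section
/- Let r ≤ s be natural numbers and set j = s − r + 1. Then Spec(DS_{r,s}) = { j + 2l : 0 ≤ l ≤ r }; that is, the double star DS_{r,s} admits a proper edge coloring with exactly κ uniquely colored edges if and only if κ = s − r + 1 + 2l for some l with 0 ≤ l ≤ r. -/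
/-!
In a proper colouring of `DS_{r,s}` the dominating edge `yx` is always uniquely coloured, the
`r` leaf edges at `y` carry distinct colours, and so do the `s` leaf edges at `x`; a leaf edge
fails to be unique exactly when its colour also occurs at the other centre. If `m` colours are
shared between the two sides, there are `1 + (r - m) + (s - m) = (s - r + 1) + 2 (r - m)` unique
edges, with `0 ≤ m ≤ r`. Conversely, colouring `y y_i` by `i + 1` and `x x_j` by `l + 1 + j`
shares exactly `r - l` colours.
-/

open SimpleGraph

open Function Set

theorem Fin.ncard_setOf_val_lt (n l : ℕ) : {i : Fin n | (i : ℕ) < l}.ncard = min n l := by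
  rw [← Finset.coe_filter_univ, ncard_coe_finset, Fin.card_filter_val_lt]

theorem image_setOf_notMem_range {α β γ : Type*} (f : α → γ) (g : β → γ) :
    f '' {a | f a ∉ range g} = range f \ range g :=
  image_preimage_eq_range_inter.trans sdiff_eq.symm

theorem ncard_setOf_notMem_range_add_nat_card {α β γ : Type*} [Finite α] [Finite β]
    {f : α → γ} {g : β → γ} (hf : Injective f) (hg : Injective g) :
    {a | f a ∉ range g}.ncard + Nat.card β = {b | g b ∉ range f}.ncard + Nat.card α := by
  rw [← ncard_image_of_injective _ hf, ← ncard_image_of_injective _ hg,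
    image_setOf_notMem_range, image_setOf_notMem_range, ← ncard_range_of_injective hf,
    ← ncard_range_of_injective hg, ncard_sdiff_add_ncard (range f) (range g),
    ncard_sdiff_add_ncard (range g) (range f), union_comm]

namespace DoubleStar

variable {r s : ℕ}

variable (r s) in
def domEdge : Sym2 (Fin 2 ⊕ Fin r ⊕ Fin s) := s(.inl 0, .inl 1)

variable (s) in
def yEdge (i : Fin r) : Sym2 (Fin 2 ⊕ Fin r ⊕ Fin s) := s(.inl 0, .inr (.inl i))

variable (r) in
def xEdge (j : Fin s) : Sym2 (Fin 2 ⊕ Fin r ⊕ Fin s) := s(.inl 1, .inr (.inr j))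

theorem mem_edgeSet_doubleStar {e : Sym2 (Fin 2 ⊕ Fin r ⊕ Fin s)} :
    e ∈ (doubleStar r s).edgeSet ↔
      e = domEdge r s ∨ (∃ i, e = yEdge s i) ∨ ∃ j, e = xEdge r j := by
  rw [doubleStar, SimpleGraph.edgeSet_fromEdgeSet, mem_sdiff]
  constructor
  · rintro ⟨h, -⟩
    simp only [mem_union, mem_singleton_iff, mem_ofPred_eq] at h
    unfold domEdge yEdge xEdge
    tauto
  · rintro (rfl | ⟨i, rfl⟩ | ⟨j, rfl⟩) <;> simp [domEdge, yEdge, xEdge]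

theorem domEdge_mem : domEdge r s ∈ (doubleStar r s).edgeSet :=
  mem_edgeSet_doubleStar.2 (.inl rfl)

theorem yEdge_mem (i : Fin r) : yEdge s i ∈ (doubleStar r s).edgeSet :=
  mem_edgeSet_doubleStar.2 (.inr (.inl ⟨i, rfl⟩))

theorem xEdge_mem (j : Fin s) : xEdge r j ∈ (doubleStar r s).edgeSet :=
  mem_edgeSet_doubleStar.2 (.inr (.inr ⟨j, rfl⟩))

theorem yEdge_ne_domEdge (i : Fin r) : yEdge s i ≠ domEdge r s := by
  simp [domEdge, yEdge]

theorem xEdge_ne_domEdge (j : Fin s) : xEdge r j ≠ domEdge r s := by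
  simp [domEdge, xEdge]

theorem yEdge_ne_xEdge (i : Fin r) (j : Fin s) : yEdge s i ≠ xEdge r j := by
  simp [yEdge, xEdge]

theorem yEdge_injective : Injective (yEdge (r := r) s) := by
  intro i i' h; simpa [yEdge] using h

theorem xEdge_injective : Injective (xEdge (s := s) r) := by
  intro j j' h; simpa [xEdge] using h

theorem not_exists_mem_yEdge_mem_xEdge (i : Fin r) (j : Fin s) :
    ¬∃ v, v ∈ yEdge s i ∧ v ∈ xEdge r j := by
  rintro ⟨v, hy, hx⟩
  simp only [yEdge, xEdge, Sym2.mem_iff] at hy hx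
  rcases hy with rfl | rfl <;> rcases hx with h | h <;> simp at h

theorem isProperEdgeColoring_iff {c : Sym2 (Fin 2 ⊕ Fin r ⊕ Fin s) → ℕ} :
    IsProperEdgeColoring (doubleStar r s) c ↔
      Injective (c ∘ yEdge s) ∧ Injective (c ∘ xEdge r) ∧
        (∀ i, c (yEdge s i) ≠ c (domEdge r s)) ∧ ∀ j, c (xEdge r j) ≠ c (domEdge r s) := by
  constructor
  · intro hc
    refine ⟨fun i i' h => ?_, fun j j' h => ?_, fun i => ?_, fun j => ?_⟩
    · by_contra hne
      exact hc _ (yEdge_mem i) _ (yEdge_mem i') (yEdge_injective.ne hne)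
        ⟨.inl 0, by simp [yEdge]⟩ h
    · by_contra hne
      exact hc _ (xEdge_mem j) _ (xEdge_mem j') (xEdge_injective.ne hne)
        ⟨.inl 1, by simp [xEdge]⟩ h
    · exact hc _ (yEdge_mem i) _ domEdge_mem (yEdge_ne_domEdge i)
        ⟨.inl 0, by simp [yEdge, domEdge]⟩
    · exact hc _ (xEdge_mem j) _ domEdge_mem (xEdge_ne_domEdge j)
        ⟨.inl 1, by simp [xEdge, domEdge]⟩
  · rintro ⟨hy, hx, hyd, hxd⟩ e₁ he₁ e₂ he₂ hne hshare
    rcases mem_edgeSet_doubleStar.1 he₁ with rfl | ⟨i, rfl⟩ | ⟨j, rfl⟩ <;>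
      rcases mem_edgeSet_doubleStar.1 he₂ with rfl | ⟨i', rfl⟩ | ⟨j', rfl⟩
    · exact absurd rfl hne
    · exact (hyd i').symm
    · exact (hxd j').symm
    · exact hyd i
    · exact hy.ne fun h => hne (congrArg _ h)
    · exact absurd hshare (not_exists_mem_yEdge_mem_xEdge i j')
    · exact hxd j
    · exact absurd (by simpa only [and_comm] using hshare) (not_exists_mem_yEdge_mem_xEdge i' j)
    · exact hx.ne fun h => hne (congrArg _ h)

variable {c : Sym2 (Fin 2 ⊕ Fin r ⊕ Fin s) → ℕ}

theorem domEdge_mem_uniqueEdges (hc : IsProperEdgeColoring (doubleStar r s) c) :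
    domEdge r s ∈ uniqueEdges (doubleStar r s) c := by
  obtain ⟨-, -, hyd, hxd⟩ := isProperEdgeColoring_iff.1 hc
  refine ⟨domEdge_mem, fun e he hce => ?_⟩
  rcases mem_edgeSet_doubleStar.1 he with rfl | ⟨i, rfl⟩ | ⟨j, rfl⟩
  · rfl
  · exact absurd hce (hyd i)
  · exact absurd hce (hxd j)

theorem yEdge_mem_uniqueEdges_iff (hc : IsProperEdgeColoring (doubleStar r s) c) (i : Fin r) :
    yEdge s i ∈ uniqueEdges (doubleStar r s) c ↔ c (yEdge s i) ∉ range (c ∘ xEdge r) := by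
  obtain ⟨hy, -, hyd, -⟩ := isProperEdgeColoring_iff.1 hc
  refine ⟨fun ⟨_, h⟩ ⟨j, hj⟩ => yEdge_ne_xEdge i j (h _ (xEdge_mem j) hj).symm,
    fun h => ⟨yEdge_mem i, fun e he hce => ?_⟩⟩
  rcases mem_edgeSet_doubleStar.1 he with rfl | ⟨i', rfl⟩ | ⟨j, rfl⟩
  · exact absurd hce.symm (hyd i)
  · exact congrArg _ (hy hce)
  · exact absurd ⟨j, hce⟩ h

theorem xEdge_mem_uniqueEdges_iff (hc : IsProperEdgeColoring (doubleStar r s) c) (j : Fin s) :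
    xEdge r j ∈ uniqueEdges (doubleStar r s) c ↔ c (xEdge r j) ∉ range (c ∘ yEdge s) := by
  obtain ⟨-, hx, -, hxd⟩ := isProperEdgeColoring_iff.1 hc
  refine ⟨fun ⟨_, h⟩ ⟨i, hi⟩ => yEdge_ne_xEdge i j (h _ (yEdge_mem i) hi),
    fun h => ⟨xEdge_mem j, fun e he hce => ?_⟩⟩
  rcases mem_edgeSet_doubleStar.1 he with rfl | ⟨i, rfl⟩ | ⟨j', rfl⟩
  · exact absurd hce.symm (hxd j)
  · exact absurd ⟨i, hce⟩ h
  · exact congrArg _ (hx hce)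

theorem uniqueEdges_eq (hc : IsProperEdgeColoring (doubleStar r s) c) :
    uniqueEdges (doubleStar r s) c =
      insert (domEdge r s) (yEdge s '' {i | c (yEdge s i) ∉ range (c ∘ xEdge r)} ∪
        xEdge r '' {j | c (xEdge r j) ∉ range (c ∘ yEdge s)}) := by
  ext e
  constructor
  · intro he
    rcases mem_edgeSet_doubleStar.1 he.1 with rfl | ⟨i, rfl⟩ | ⟨j, rfl⟩
    · exact mem_insert _ _
    · exact mem_insert_of_mem _ (.inl ⟨i, (yEdge_mem_uniqueEdges_iff hc i).1 he, rfl⟩)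
    · exact mem_insert_of_mem _ (.inr ⟨j, (xEdge_mem_uniqueEdges_iff hc j).1 he, rfl⟩)
  · rintro (rfl | ⟨i, hi, rfl⟩ | ⟨j, hj, rfl⟩)
    · exact domEdge_mem_uniqueEdges hc
    · exact (yEdge_mem_uniqueEdges_iff hc i).2 hi
    · exact (xEdge_mem_uniqueEdges_iff hc j).2 hj

theorem ncard_insert_domEdge (A : Set (Fin r)) (B : Set (Fin s)) :
    (insert (domEdge r s) (yEdge s '' A ∪ xEdge r '' B)).ncard = 1 + A.ncard + B.ncard := by
  rw [ncard_insert_of_notMem, ncard_union_eq, ncard_image_of_injective _ yEdge_injective,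
    ncard_image_of_injective _ xEdge_injective]
  · ring
  · exact disjoint_left.2 fun _ ⟨i, _, hi⟩ ⟨j, _, hj⟩ => yEdge_ne_xEdge i j (hi.trans hj.symm)
  · rintro (⟨i, -, h⟩ | ⟨j, -, h⟩)
    exacts [yEdge_ne_domEdge i h, xEdge_ne_domEdge j h]

theorem ncard_uniqueEdges_add (hc : IsProperEdgeColoring (doubleStar r s) c) :
    (uniqueEdges (doubleStar r s) c).ncard + r =
      s + 1 + 2 * {i | c (yEdge s i) ∉ range (c ∘ xEdge r)}.ncard := by
  obtain ⟨hy, hx, -, -⟩ := isProperEdgeColoring_iff.1 hc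
  have hshared := ncard_setOf_notMem_range_add_nat_card hy hx
  simp only [Nat.card_eq_fintype_card, Fintype.card_fin, comp_apply] at hshared
  rw [uniqueEdges_eq hc, ncard_insert_domEdge]
  omega

variable (r s) in
def leafLabel (l : ℕ) : Fin 2 ⊕ Fin r ⊕ Fin s → ℕ
  | .inl _ => 0
  | .inr (.inl i) => i + 1
  | .inr (.inr j) => l + 1 + j

variable (r s) in
/-- An edge is coloured by the sum of the labels of its ends; as the centres have label `0`,
a leaf edge gets the label of its leaf and the dominating edge gets `0`. -/
def leafColoring (l : ℕ) : Sym2 (Fin 2 ⊕ Fin r ⊕ Fin s) → ℕ :=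
  Sym2.lift ⟨fun a b => leafLabel r s l a + leafLabel r s l b, fun _ _ => add_comm _ _⟩

@[simp] theorem leafColoring_domEdge (l : ℕ) : leafColoring r s l (domEdge r s) = 0 := rfl

@[simp] theorem leafColoring_yEdge (l : ℕ) (i : Fin r) :
    leafColoring r s l (yEdge s i) = i + 1 := by
  simp [leafColoring, leafLabel, yEdge]

@[simp] theorem leafColoring_xEdge (l : ℕ) (j : Fin s) :
    leafColoring r s l (xEdge r j) = l + 1 + j := by
  simp [leafColoring, leafLabel, xEdge]

theorem isProperEdgeColoring_leafColoring (l : ℕ) :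
    IsProperEdgeColoring (doubleStar r s) (leafColoring r s l) :=
  isProperEdgeColoring_iff.2
    ⟨fun i i' h => Fin.ext (by simpa using h), fun j j' h => Fin.ext (by simpa using h),
      by simp, by simp⟩

theorem setOf_leafColoring_yEdge_notMem_range (hrs : r ≤ s) (l : ℕ) :
    {i : Fin r | leafColoring r s l (yEdge s i) ∉ range (leafColoring r s l ∘ xEdge r)} =
      {i : Fin r | (i : ℕ) < l} := by
  ext i
  simp only [mem_ofPred_eq, mem_range, comp_apply, leafColoring_yEdge, leafColoring_xEdge,
    not_exists]
  refine ⟨fun h => ?_, fun h j hj => by omega⟩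
  by_contra hli
  exact h ⟨i - l, by omega⟩ (by simp; omega)

theorem ncard_uniqueEdges_leafColoring (hrs : r ≤ s) {l : ℕ} (hl : l ≤ r) :
    (uniqueEdges (doubleStar r s) (leafColoring r s l)).ncard = s - r + 1 + 2 * l := by
  have hcount := ncard_uniqueEdges_add (isProperEdgeColoring_leafColoring (r := r) (s := s) l)
  rw [setOf_leafColoring_yEdge_notMem_range hrs, Fin.ncard_setOf_val_lt, min_eq_right hl]
    at hcount
  omega

end DoubleStar

open DoubleStar in
/-- For `r ≤ s`, `Spec(DS_{r,s}) = {(s − r + 1) + 2l : 0 ≤ l ≤ r}`. -/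
theorem doubleStar_spectrum (r s : ℕ) (hrs : r ≤ s) :
    Spec (doubleStar r s) = {κ : ℕ | ∃ l : ℕ, l ≤ r ∧ κ = s - r + 1 + 2 * l} := by
  ext κ
  constructor
  · rintro ⟨c, hc, rfl⟩
    have hcount := ncard_uniqueEdges_add hc
    exact ⟨{i | c (yEdge s i) ∉ range (c ∘ xEdge r)}.ncard,
      (ncard_le_card _).trans_eq (Nat.card_fin r), by omega⟩
  · rintro ⟨l, hl, rfl⟩
    exact ⟨leafColoring r s l, isProperEdgeColoring_leafColoring l,
      ncard_uniqueEdges_leafColoring hrs hl⟩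
end

section
/- Let r ≤ s and 0 ≤ l ≤ r be natural numbers and set j = s − r + 1. Every proper edge coloring of the double star DS_{r,s+l} contains a copy of DS_{r,s} having at least j + 2l uniquely colored edges (i.e., at least j + 2l edges of the copy receive colors appearing on no other edge of the copy). -/
open SimpleGraph

/-! In a proper edge colouring of a double star the central edge has a colour of its own, and
the leaf edges at each centre have pairwise distinct colours, so a colour repeats only on a
pair (leaf edge at `y`, leaf edge at `x`). At most `r` leaf edges at `x` share a colour with a
leaf edge at `y`; deleting `l` of them (all of them, if there are fewer) leaves a copy of
`DS_{r,s}` with at most `r - l` such pairs, hence at most `2 (r - l)` of its `r + s + 1` edges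
are not uniquely coloured. -/

open Function Set Sum

def uniquelyColored {ι : Type*} (g : ι → ℕ) : Set ι :=
  {a | ∀ b, g b = g a → b = a}

lemma ncard_preimage_eq_ncard_range_inter {γ δ : Type*} {f : γ → δ} (hf : Injective f)
    (t : Set δ) : (f ⁻¹' t).ncard = (range f ∩ t).ncard := by
  rw [← image_preimage_eq_range_inter, ncard_image_of_injective _ hf]

lemma ncard_compl_uniquelyColored_le {α β : Type*} [Finite α] [Finite β]
    (g0 : ℕ) (gα : α → ℕ) (gβ : β → ℕ)
    (hα : Injective gα) (hβ : Injective gβ)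
    (h0α : g0 ∉ range gα) (h0β : g0 ∉ range gβ) :
    (uniquelyColored fun o : Option (α ⊕ β) => o.elim g0 (Sum.elim gα gβ))ᶜ.ncard ≤
      2 * (range gα ∩ range gβ).ncard := by
  have hsub : (uniquelyColored fun o : Option (α ⊕ β) => o.elim g0 (Sum.elim gα gβ))ᶜ ⊆
      (some ∘ inl) '' (gα ⁻¹' range gβ) ∪ (some ∘ inr) '' (gβ ⁻¹' range gα) := by
    intro a ha
    simp only [uniquelyColored, mem_compl_iff, mem_ofPred_eq, not_forall] at ha
    obtain ⟨b, hba, hne⟩ := ha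
    rcases a with _ | i | j <;> rcases b with _ | i' | j' <;>
      simp only [Option.elim_none, Option.elim_some, Sum.elim_inl, Sum.elim_inr] at hba
    · exact absurd rfl hne
    · exact absurd ⟨i', hba⟩ h0α
    · exact absurd ⟨j', hba⟩ h0β
    · exact absurd ⟨i, hba.symm⟩ h0α
    · exact absurd (by rw [hα hba]) hne
    · exact Or.inl ⟨i, ⟨j', hba⟩, rfl⟩
    · exact absurd ⟨j, hba.symm⟩ h0β
    · exact Or.inr ⟨j, ⟨i', hba⟩, rfl⟩
    · exact absurd (by rw [hβ hba]) hne
  calc _ ≤ _ := ncard_le_ncard hsub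
    _ ≤ _ := ncard_union_le _ _
    _ = 2 * (range gα ∩ range gβ).ncard := by
      rw [ncard_image_of_injective _ (Option.some_injective _ |>.comp inl_injective),
        ncard_image_of_injective _ (Option.some_injective _ |>.comp inr_injective),
        ncard_preimage_eq_ncard_range_inter hα, ncard_preimage_eq_ncard_range_inter hβ,
        inter_comm (range gβ)]
      ring

lemma copyUniqueCount_eq_ncard_uniquelyColored {ι W V : Type*} {H : SimpleGraph W}
    {e : ι → Sym2 W} (he : Injective e) (hrange : range e = H.edgeSet)
    (c : Sym2 V → ℕ) (f : W → V) :
    copyUniqueCount H c f = (uniquelyColored fun i => c ((e i).map f)).ncard := by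
  rw [copyUniqueCount, ← hrange, ← ncard_image_of_injective _ he]
  congr 1
  ext x
  constructor
  · rintro ⟨⟨i, rfl⟩, hu⟩
    exact ⟨i, fun j hj => he (hu _ ⟨j, rfl⟩ hj), rfl⟩
  · rintro ⟨i, hi, rfl⟩
    exact ⟨⟨i, rfl⟩, by rintro _ ⟨j, rfl⟩ hj; rw [hi j hj]⟩

lemma IsProperEdgeColoring.injective_star {V ι : Type*} {G : SimpleGraph V} {c : Sym2 V → ℕ}
    (hc : IsProperEdgeColoring G c) {v : V} {w : ι → V} (hw : Injective w)
    (hadj : ∀ i, G.Adj v (w i)) : Injective fun i => c s(v, w i) := by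
  intro i j hij
  by_contra hne
  exact hc _ (hadj i) _ (hadj j) (by rw [Ne, Sym2.congr_right]; exact hw.ne hne)
    ⟨v, Sym2.mem_mk_left _ _, Sym2.mem_mk_left _ _⟩ hij

section DoubleStar

variable {a b b' : ℕ}

def doubleStarEdge (a b : ℕ) : Option (Fin a ⊕ Fin b) → Sym2 (Fin 2 ⊕ Fin a ⊕ Fin b)
  | none => s(inl 0, inl 1)
  | some (inl i) => s(inl 0, inr (inl i))
  | some (inr j) => s(inl 1, inr (inr j))

lemma doubleStarEdge_injective (a b : ℕ) : Injective (doubleStarEdge a b) := by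
  rintro (_ | i | j) (_ | i' | j') h <;> simp_all [doubleStarEdge]

lemma range_doubleStarEdge (a b : ℕ) :
    range (doubleStarEdge a b) = (doubleStar a b).edgeSet := by
  rw [doubleStar, edgeSet_fromEdgeSet]
  ext e
  simp only [mem_sdiff, mem_union, mem_singleton_iff, mem_ofPred_eq, mem_range]
  constructor
  · rintro ⟨_ | i | j, rfl⟩ <;> simp [doubleStarEdge]
  · rintro ⟨(rfl | ⟨i, rfl⟩) | ⟨j, rfl⟩, -⟩
    exacts [⟨none, rfl⟩, ⟨some (inl i), rfl⟩, ⟨some (inr j), rfl⟩]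

lemma doubleStar_adj_of_doubleStarEdge_eq {u v : Fin 2 ⊕ Fin a ⊕ Fin b}
    (o : Option (Fin a ⊕ Fin b)) (h : doubleStarEdge a b o = s(u, v)) :
    (doubleStar a b).Adj u v :=
  (mem_edgeSet _).1 (range_doubleStarEdge a b ▸ ⟨o, h⟩)

lemma isCopy_doubleStar_sumMap (φ : Fin b ↪ Fin b') :
    IsCopy (doubleStar a b) (doubleStar a b') (Sum.map id (Sum.map id φ)) := by
  refine ⟨injective_id.sumMap (injective_id.sumMap φ.injective), fun u v huv => ?_⟩
  obtain ⟨o, ho⟩ := (range_doubleStarEdge a b).symm ▸ (mem_edgeSet _).2 huv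
  refine doubleStar_adj_of_doubleStarEdge_eq (o.map (Sum.map id φ)) ?_
  rw [← Sym2.map_mk, ← ho]
  rcases o with _ | i | j <;> rfl

variable {c : Sym2 (Fin 2 ⊕ Fin a ⊕ Fin b) → ℕ}

lemma IsProperEdgeColoring.injective_doubleStar_left
    (hc : IsProperEdgeColoring (doubleStar a b) c) :
    Injective fun o : Option (Fin a) =>
      o.elim (c s(inl 0, inl 1)) fun i => c s(inl 0, inr (inl i)) := by
  convert hc.injective_star (v := inl 0)
    (w := fun o : Option (Fin a) => o.elim (inl 1) (inr ∘ inl)) ?_ ?_ using 1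
  · funext o; cases o <;> rfl
  · rintro (_ | i) (_ | i') h <;> simp_all
  · rintro (_ | i)
    exacts [doubleStar_adj_of_doubleStarEdge_eq none rfl,
      doubleStar_adj_of_doubleStarEdge_eq (some (inl i)) rfl]

lemma IsProperEdgeColoring.injective_doubleStar_right
    (hc : IsProperEdgeColoring (doubleStar a b) c) :
    Injective fun o : Option (Fin b) =>
      o.elim (c s(inl 0, inl 1)) fun j => c s(inl 1, inr (inr j)) := by
  convert hc.injective_star (v := inl 1)
    (w := fun o : Option (Fin b) => o.elim (inl 0) (inr ∘ inr)) ?_ ?_ using 1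
  · funext o; cases o
    exacts [congrArg c (Sym2.eq_swap), rfl]
  · rintro (_ | j) (_ | j') h <;> simp_all
  · rintro (_ | j)
    exacts [doubleStar_adj_of_doubleStarEdge_eq none Sym2.eq_swap,
      doubleStar_adj_of_doubleStarEdge_eq (some (inr j)) rfl]

end DoubleStar

lemma exists_ncard_eq_ncard_inter_le {β : Type*} [Finite β] {s l : ℕ}
    (hβ : Nat.card β = s + l) (B : Set β) :
    ∃ S : Set β, S.ncard = s ∧ (B ∩ S).ncard ≤ B.ncard - l := by
  have hB := ncard_add_ncard_compl B
  by_cases h : Bᶜ.ncard ≤ s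
  · obtain ⟨S, hBS, -, hS⟩ :=
      exists_subsuperset_card_eq (subset_univ Bᶜ) h (by rw [ncard_univ]; omega)
    refine ⟨S, hS, ?_⟩
    rw [inter_comm, ← sdiff_compl, ncard_sdiff hBS]
    omega
  · obtain ⟨S, hSB, hS⟩ := exists_subset_card_eq (s := Bᶜ) (n := s) (by omega)
    refine ⟨S, hS, ?_⟩
    rw [(disjoint_compl_right.mono_right hSB).inter_eq, ncard_empty]
    exact Nat.zero_le _

lemma exists_embedding_ncard_inter_range_le {β : Type*} [Finite β] {s l : ℕ}
    (hβ : Nat.card β = s + l) (B : Set β) :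
    ∃ φ : Fin s ↪ β, (B ∩ range φ).ncard ≤ B.ncard - l := by
  obtain ⟨S, hS, hBS⟩ := exists_ncard_eq_ncard_inter_le hβ B
  let e := (Finite.equivFinOfCardEq hS).symm
  refine ⟨⟨Subtype.val ∘ e, Subtype.val_injective.comp e.injective⟩, ?_⟩
  rwa [Embedding.coeFn_mk, range_comp, e.range_eq_univ, image_univ, Subtype.range_coe]

/-- For `r ≤ s` and `l ≤ r`, every proper edge coloring of `DS_{r,s+l}`
contains a copy of `DS_{r,s}` with at least `(s − r + 1) + 2l` uniquely colored
edges. -/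
theorem doubleStar_aug_kUnique (r s l : ℕ) (hrs : r ≤ s) (hl : l ≤ r)
    (c : Sym2 (Fin 2 ⊕ Fin r ⊕ Fin (s + l)) → ℕ)
    (hc : IsProperEdgeColoring (doubleStar r (s + l)) c) :
    ContainsKUniqueCopy (doubleStar r s) (doubleStar r (s + l)) c
      (s - r + 1 + 2 * l) := by
  set c0 := c s(inl 0, inl 1)
  set cY : Fin r → ℕ := fun i => c s(inl 0, inr (inl i))
  set cX : Fin (s + l) → ℕ := fun j => c s(inl 1, inr (inr j))
  obtain ⟨hY, h0Y⟩ : Injective cY ∧ c0 ∉ range cY :=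
    Option.injective_iff.1 hc.injective_doubleStar_left
  obtain ⟨hX, h0X⟩ : Injective cX ∧ c0 ∉ range cX :=
    Option.injective_iff.1 hc.injective_doubleStar_right
  obtain ⟨φ, hφ⟩ :=
    exists_embedding_ncard_inter_range_le (s := s) (l := l) (by simp) (cX ⁻¹' range cY)
  refine ⟨_, isCopy_doubleStar_sumMap φ, ?_⟩
  have hcopy : (fun o => c ((doubleStarEdge r s o).map (Sum.map id (Sum.map id φ)))) =
      fun o => o.elim c0 (Sum.elim cY (cX ∘ φ)) := by
    funext o; rcases o with _ | i | j <;> rfl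
  have hcommon : (range cY ∩ range (cX ∘ φ)).ncard ≤ r - l := by
    rw [range_comp, inter_comm, ← image_inter_preimage]
    calc _ ≤ (range φ ∩ cX ⁻¹' range cY).ncard := ncard_image_le
      _ ≤ (cX ⁻¹' range cY).ncard - l := by rwa [inter_comm]
      _ ≤ r - l := by
        gcongr
        rw [ncard_preimage_eq_ncard_range_inter hX]
        exact (ncard_le_ncard inter_subset_right).trans_eq
          (by rw [ncard_range_of_injective hY, Nat.card_fin])
  have hbad := ncard_compl_uniquelyColored_le c0 cY (cX ∘ φ) hY (hX.comp φ.injective) h0Y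
    (fun ⟨j, hj⟩ => h0X ⟨φ j, hj⟩)
  have hsplit := ncard_add_ncard_compl
    (uniquelyColored fun o : Option (Fin r ⊕ Fin s) => o.elim c0 (Sum.elim cY (cX ∘ φ)))
  rw [copyUniqueCount_eq_ncard_uniquelyColored (doubleStarEdge_injective r s)
    (range_doubleStarEdge r s), hcopy]
  simp only [Nat.card_eq_fintype_card, Fintype.card_option, Fintype.card_sum,
    Fintype.card_fin] at hsplit
  omega
end

section
/- Let r ≤ s and 0 ≤ l ≤ r be natural numbers and set j = s − r + 1. For every n ≥ s + l there exists a simple graph G on n vertices with at least ⌊(s+l−1)·n/2⌋ edges together with a proper edge coloring of G in which no copy of the double star DS_{r,s} has j + 2l or more uniquely colored edges. (In other words, ex_{j+2l}(n, DS_{r,s}) ≥ (s+l−1)n/2 + o(n).) -/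
/-!
On `ℤ/n`, join `a ≠ b` when the residue of `a + b` is below `K = s + l`, and color the edge `ab`
by that residue. Every vertex has degree at least `K - 1`, the coloring is proper, and it uses
only `K` colors. In a double star every edge contains one of the two centres, so in a properly
colored copy each color occurs at most twice. Hence
`#edges + #uniquely colored edges ≤ 2 · #colors ≤ 2K`, i.e. a copy of `DS_{r,s}` has at most
`s - r + 2l - 1` uniquely colored edges.
-/

open SimpleGraph

open Finset

section Counting

variable {α β : Type*} [DecidableEq α] [DecidableEq β]

theorem Finset.card_add_card_filter_unique_le (s : Finset α) (c : α → β)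
    (hc : ∀ t, #{x ∈ s | c x = t} ≤ 2) :
    #s + #{x ∈ s | ∀ y ∈ s, c y = c x → y = x} ≤ 2 * #(s.image c) := by
  set U := {x ∈ s | ∀ y ∈ s, c y = c x → y = x}
  have hs := card_eq_sum_card_fiberwise (f := c) (s := s) (t := s.image c)
    fun x hx => mem_image_of_mem c hx
  have hU := card_eq_sum_card_fiberwise (f := c) (s := U) (t := s.image c)
    fun x hx => mem_image_of_mem c (mem_filter.mp hx).1
  rw [hs, hU, ← sum_add_distrib, mul_comm, ← smul_eq_mul, ← sum_const]
  refine sum_le_sum fun t _ => ?_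
  by_cases h1 : #{x ∈ s | c x = t} ≤ 1
  · have : #{x ∈ U | c x = t} ≤ #{x ∈ s | c x = t} :=
      card_le_card (filter_subset_filter _ (filter_subset _ _))
    omega
  · suffices #{x ∈ U | c x = t} = 0 by have := hc t; omega
    rw [card_eq_zero, filter_eq_empty_iff]
    rintro x hx rfl
    obtain ⟨-, hxu⟩ := mem_filter.mp hx
    refine h1 (card_le_one.mpr fun y hy z hz => ?_)
    rw [mem_filter] at hy hz
    rw [hxu y hy.1 hy.2, hxu z hz.1 hz.2]

end Counting

section EdgeColoring

variable {W V : Type*} {H : SimpleGraph W} {G : SimpleGraph V} {c : Sym2 V → ℕ} {f : W → V}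

theorem IsCopy.map_mem_edgeSet (hf : IsCopy H G f) {e : Sym2 W} (he : e ∈ H.edgeSet) :
    e.map f ∈ G.edgeSet := by
  induction e using Sym2.ind with
  | _ a b => exact hf.2 a b he

theorem IsProperEdgeColoring.comap (hc : IsProperEdgeColoring G c) (hf : IsCopy H G f) :
    IsProperEdgeColoring H (fun e => c (e.map f)) := by
  rintro e₁ he₁ e₂ he₂ hne ⟨v, hv₁, hv₂⟩
  exact hc _ (hf.map_mem_edgeSet he₁) _ (hf.map_mem_edgeSet he₂)
    (fun h => hne (Sym2.map.injective hf.1 h)) ⟨f v, Sym2.mem_map.mpr ⟨v, hv₁, rfl⟩,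
      Sym2.mem_map.mpr ⟨v, hv₂, rfl⟩⟩

theorem IsProperEdgeColoring.card_filter_edgeFinset_le [Fintype H.edgeSet] {c : Sym2 W → ℕ}
    (hc : IsProperEdgeColoring H c) (S : Finset W) (hS : ∀ e ∈ H.edgeSet, ∃ v ∈ S, v ∈ e)
    (t : ℕ) : #{e ∈ H.edgeFinset | c e = t} ≤ #S := by
  refine card_le_card_of_forall_subsingleton (fun e v => v ∈ e) (fun e he => ?_) ?_
  · exact hS e (mem_edgeFinset.mp (mem_filter.mp he).1)
  · rintro v - e₁ ⟨he₁, hv₁⟩ e₂ ⟨he₂, hv₂⟩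
    rw [mem_filter, mem_edgeFinset] at he₁ he₂
    by_contra hne
    exact hc e₁ he₁.1 e₂ he₂.1 hne ⟨v, hv₁, hv₂⟩ (he₁.2.trans he₂.2.symm)

theorem IsProperEdgeColoring.ncard_edgeSet_add_ncard_uniqueEdges_le [Finite W]
    {c : Sym2 W → ℕ} (hc : IsProperEdgeColoring H c) (a b : W)
    (hab : ∀ e ∈ H.edgeSet, a ∈ e ∨ b ∈ e) :
    H.edgeSet.ncard + (uniqueEdges H c).ncard ≤ 2 * (c '' H.edgeSet).ncard := by
  classical
  have := Fintype.ofFinite W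
  have hU : uniqueEdges H c =
      ↑{e ∈ H.edgeFinset | ∀ e' ∈ H.edgeFinset, c e' = c e → e' = e} := by
    ext e; simp [uniqueEdges]
  rw [hU, ← coe_edgeFinset, ← coe_image, Set.ncard_coe_finset, Set.ncard_coe_finset,
    Set.ncard_coe_finset]
  convert card_add_card_filter_unique_le H.edgeFinset c fun t => ?_ using 4
  refine (hc.card_filter_edgeFinset_le {a, b} (fun e he => ?_) t).trans card_le_two
  rcases hab e he with h | h
  · exact ⟨a, mem_insert_self _ _, h⟩
  · exact ⟨b, mem_insert_of_mem (mem_singleton_self _), h⟩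

end EdgeColoring

section DoubleStar

variable (r s : ℕ)

theorem mem_or_mem_of_mem_edgeSet_doubleStar (e : Sym2 (Fin 2 ⊕ Fin r ⊕ Fin s))
    (he : e ∈ (doubleStar r s).edgeSet) : Sum.inl 0 ∈ e ∨ Sum.inl 1 ∈ e := by
  rw [doubleStar, edgeSet_fromEdgeSet] at he
  rcases he.1 with (rfl | ⟨i, rfl⟩) | ⟨j, rfl⟩ <;> simp

theorem add_add_one_le_ncard_edgeSet_doubleStar :
    r + s + 1 ≤ (doubleStar r s).edgeSet.ncard := by
  let g : Unit ⊕ Fin r ⊕ Fin s → Sym2 (Fin 2 ⊕ Fin r ⊕ Fin s) :=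
    Sum.elim (fun _ => s(Sum.inl 0, Sum.inl 1))
      (Sum.elim (fun i => s(Sum.inl 0, Sum.inr (Sum.inl i)))
        (fun j => s(Sum.inl 1, Sum.inr (Sum.inr j))))
  have hg : Function.Injective g := by
    rintro (⟨⟩ | i | j) (⟨⟩ | i' | j') h <;> simp_all [g]
  have hrange : Set.range g ⊆ (doubleStar r s).edgeSet := by
    rintro _ ⟨(⟨⟩ | i | j), rfl⟩ <;> simp [g, doubleStar]
  calc r + s + 1 = (Set.range g).ncard := by
        simp [Set.ncard_range_of_injective hg, add_comm]
    _ ≤ _ := Set.ncard_le_ncard hrange (Set.toFinite _)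

end DoubleStar

section SumGraph

variable {n : ℕ}

def sumGraph (n K : ℕ) : SimpleGraph (Fin n) where
  Adj a b := a ≠ b ∧ (a + b).val < K
  symm := ⟨fun a b h => ⟨h.1.symm, add_comm a b ▸ h.2⟩⟩
  loopless := ⟨fun _ h => h.1 rfl⟩

@[simp]
theorem sumGraph_adj {K : ℕ} {a b : Fin n} :
    (sumGraph n K).Adj a b ↔ a ≠ b ∧ (a + b).val < K :=
  Iff.rfl

instance (n K : ℕ) : DecidableRel (sumGraph n K).Adj :=
  fun _ _ => decidable_of_iff' _ sumGraph_adj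

def sumColoring (n : ℕ) : Sym2 (Fin n) → ℕ :=
  Sym2.lift ⟨fun a b => (a + b).val, fun a b => congrArg Fin.val (add_comm a b)⟩

theorem sumColoring_lt {K : ℕ} {e : Sym2 (Fin n)} (he : e ∈ (sumGraph n K).edgeSet) :
    sumColoring n e < K := by
  induction e using Sym2.ind with
  | _ a b => exact (sumGraph_adj.mp he).2

theorem isProperEdgeColoring_sumGraph (K : ℕ) :
    IsProperEdgeColoring (sumGraph n K) (sumColoring n) := by
  rintro e₁ - e₂ - hne ⟨v, hv₁, hv₂⟩ hc
  obtain ⟨w₁, rfl⟩ := Sym2.mem_iff_exists.mp hv₁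
  obtain ⟨w₂, rfl⟩ := Sym2.mem_iff_exists.mp hv₂
  exact hne (congrArg _ (add_left_cancel (Fin.ext hc)))

theorem le_degree_sumGraph {K : ℕ} (hK : K ≤ n) (v : Fin n) :
    K - 1 ≤ (sumGraph n K).degree v := by
  have : NeZero n := ⟨v.pos.ne'⟩
  have hcard : #(({t : Fin n | t < K} : Finset (Fin n)).erase (v + v)) ≥ K - 1 := by
    have := pred_card_le_card_erase (s := ({t : Fin n | t < K} : Finset (Fin n))) (a := v + v)
    rwa [Fin.card_filter_val_lt, min_eq_right hK] at this
  refine hcard.trans (card_le_card_of_injOn (· - v) (fun t ht => ?_) (sub_left_injective.injOn))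
  obtain ⟨htv, ht⟩ := mem_erase.mp ht
  rw [mem_coe, mem_neighborFinset, sumGraph_adj]
  refine ⟨fun h => htv ?_, ?_⟩
  · exact (eq_sub_iff_add_eq.mp h).symm
  · simpa using (mem_filter.mp ht).2

theorem le_ncard_edgeSet_sumGraph {K : ℕ} (hK : K ≤ n) :
    (K - 1) * n / 2 ≤ (sumGraph n K).edgeSet.ncard := by
  have hsum : (K - 1) * n ≤ 2 * #(sumGraph n K).edgeFinset := by
    rw [← sum_degrees_eq_twice_card_edges]
    simpa [mul_comm] using sum_le_sum fun v (_ : v ∈ univ) => le_degree_sumGraph hK v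
  rw [← coe_edgeFinset, Set.ncard_coe_finset]
  omega

end SumGraph

theorem copyUniqueCount_doubleStar_le {V : Type*} {G : SimpleGraph V} {c : Sym2 V → ℕ} {K : ℕ}
    (hc : IsProperEdgeColoring G c) (hK : ∀ e ∈ G.edgeSet, c e < K) (r s : ℕ)
    {f : Fin 2 ⊕ Fin r ⊕ Fin s → V} (hf : IsCopy (doubleStar r s) G f) :
    r + s + 1 + copyUniqueCount (doubleStar r s) c f ≤ 2 * K := by
  have hcount := (hc.comap hf).ncard_edgeSet_add_ncard_uniqueEdges_le _ _
    (mem_or_mem_of_mem_edgeSet_doubleStar r s)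
  have hcolors : ((fun e => c (e.map f)) '' (doubleStar r s).edgeSet).ncard ≤ K := by
    refine (Set.ncard_le_ncard (t := ↑(range K)) ?_ (Finset.finite_toSet _)).trans ?_
    · rintro _ ⟨e, he, rfl⟩
      exact mem_range.mpr (hK _ (hf.map_mem_edgeSet he))
    · rw [Set.ncard_coe_finset, card_range]
  calc r + s + 1 + copyUniqueCount (doubleStar r s) c f
      ≤ (doubleStar r s).edgeSet.ncard + (uniqueEdges _ fun e => c (e.map f)).ncard :=
        Nat.add_le_add_right (add_add_one_le_ncard_edgeSet_doubleStar r s) _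
    _ ≤ 2 * K := hcount.trans (Nat.mul_le_mul_left 2 hcolors)

theorem doubleStar_kUnique_turan_lower_general (r s l : ℕ)
    (n : ℕ) (hn : s + l ≤ n) :
    ∃ (G : SimpleGraph (Fin n)) (c : Sym2 (Fin n) → ℕ),
      (s + l - 1) * n / 2 ≤ G.edgeSet.ncard ∧ IsProperEdgeColoring G c ∧
      ¬ ContainsKUniqueCopy (doubleStar r s) G c (s - r + 1 + 2 * l) := by
  refine ⟨sumGraph n (s + l), sumColoring n, le_ncard_edgeSet_sumGraph hn,
    isProperEdgeColoring_sumGraph _, ?_⟩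
  rintro ⟨f, hf, hk⟩
  have := copyUniqueCount_doubleStar_le (isProperEdgeColoring_sumGraph _)
    (fun _ => sumColoring_lt) r s hf
  omega

/-- For `r ≤ s`, `l ≤ r` and `n ≥ s + l`, there is an `n`-vertex graph
with at least `⌊(s+l−1)·n/2⌋` edges and a proper edge coloring containing no copy of
`DS_{r,s}` with `(s − r + 1) + 2l` or more uniquely colored edges; i.e.
`ex_{j+2l}(n, DS_{r,s}) ≥ (s+l−1)n/2 + o(n)`. -/
theorem doubleStar_kUnique_turan_lower (r s l : ℕ) (hrs : r ≤ s) (hl : l ≤ r)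
    (n : ℕ) (hn : s + l ≤ n) :
    ∃ (G : SimpleGraph (Fin n)) (c : Sym2 (Fin n) → ℕ),
      (s + l - 1) * n / 2 ≤ G.edgeSet.ncard ∧ IsProperEdgeColoring G c ∧
      ¬ ContainsKUniqueCopy (doubleStar r s) G c (s - r + 1 + 2 * l) :=
  doubleStar_kUnique_turan_lower_general r s l n hn
end

section
/- The complete graph K_6 admits a proper edge coloring using only 5 colors, and every proper edge coloring of K_6 that uses at most 5 colors (equivalently, a coloring in which every vertex is incident to exactly one edge of each color) contains no rainbow copy of the double star DS_{2,2}. -/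
open SimpleGraph

/-!
A proper coloring of `K₆` with at most 5 colors is a 1-factorization: each vertex sees all 5
colors, so every color class is a perfect matching. Let `y x` be the central edge of a rainbow
`DS_{2,2}` with leaves `y₀ y₁` at `y` and `x₀ x₁` at `x`. The edge of color `c(y yᵢ)` at `x`
can only go to the other leaf `y_{1-i}`, so the perfect matching of that color contains `y yᵢ`
and `x y_{1-i}`, and hence also `x₀ x₁`. This holds for both `i`, so
`c(y y₀) = c(x₀ x₁) = c(y y₁)`, contradicting properness at `y`.
-/

theorem isProperEdgeColoring_iff {V : Type*} {G : SimpleGraph V} {c : Sym2 V → ℕ} :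
    IsProperEdgeColoring G c ↔
      ∀ u v w, G.Adj u v → G.Adj u w → v ≠ w → c s(u, v) ≠ c s(u, w) := by
  constructor
  · intro hc u v w huv huw hvw
    refine hc _ huv _ huw ?_ ⟨u, Sym2.mem_mk_left u v, Sym2.mem_mk_left u w⟩
    simpa [huv.ne.symm] using hvw
  · rintro hc e₁ he₁ e₂ he₂ hne ⟨u, hu₁, hu₂⟩
    obtain ⟨v, rfl⟩ := Sym2.mem_iff_exists.mp hu₁
    obtain ⟨w, rfl⟩ := Sym2.mem_iff_exists.mp hu₂
    exact hc u v w he₁ he₂ (fun hvw => hne (hvw ▸ rfl))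

/-- Every color class of `c` is a perfect matching of the complete graph. -/
structure IsOneFactorization {V : Type*} (c : Sym2 V → ℕ) : Prop where
  proper : IsProperEdgeColoring (⊤ : SimpleGraph V) c
  exists_color_eq : ∀ u v w : V, v ≠ w → ∃ z, u ≠ z ∧ c s(u, z) = c s(v, w)

namespace IsOneFactorization

variable {V : Type*} {c : Sym2 V → ℕ}

theorem eq_of_color_eq (hc : IsOneFactorization c) {u v w : V} (huv : u ≠ v) (huw : u ≠ w)
    (h : c s(u, v) = c s(u, w)) : v = w := by
  by_contra hvw
  exact isProperEdgeColoring_iff.mp hc.proper u v w huv huw hvw h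

theorem color_eq_of_forall_ne (hc : IsOneFactorization c) {u v w w' : V} (hvw : v ≠ w)
    (h : ∀ z, u ≠ z → z ≠ w' → c s(u, z) ≠ c s(v, w)) : c s(u, w') = c s(v, w) := by
  obtain ⟨z, huz, hz⟩ := hc.exists_color_eq u v w hvw
  by_cases hzw : z = w'
  · exact hzw ▸ hz
  · exact absurd hz (h z huz hzw)

theorem of_card_colors_lt [Fintype V]
    (hc : IsProperEdgeColoring (⊤ : SimpleGraph V) c) {t : Finset ℕ}
    (ht : t.card < Fintype.card V) (hall : ∀ e ∈ (⊤ : SimpleGraph V).edgeSet, c e ∈ t) :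
    IsOneFactorization c := by
  classical
  refine ⟨hc, fun u v w hvw => ?_⟩
  have hsurj := Finset.surj_on_of_inj_on_of_card_le (s := Finset.univ.erase u) (t := t)
    (fun z _ => c s(u, z))
    (fun z hz => hall _ (by simpa using (Finset.ne_of_mem_erase hz).symm))
    (fun a b ha hb hab => by
      by_contra hne
      exact isProperEdgeColoring_iff.mp hc u a b (by simpa using (Finset.ne_of_mem_erase ha).symm)
        (by simpa using (Finset.ne_of_mem_erase hb).symm) hne hab)
    (by rw [Finset.card_erase_of_mem (Finset.mem_univ u), Finset.card_univ]; omega)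
  obtain ⟨z, hz, hcz⟩ := hsurj (c s(v, w)) (hall _ (by simpa using hvw))
  exact ⟨z, (Finset.ne_of_mem_erase hz).symm, hcz.symm⟩

theorem comp_sym2Map {W : Type*} (hc : IsOneFactorization c) {f : W → V}
    (hf : Function.Bijective f) : IsOneFactorization (c ∘ Sym2.map f) := by
  refine ⟨isProperEdgeColoring_iff.mpr fun u v w huv huw hvw => ?_, fun u v w hvw => ?_⟩
  · exact isProperEdgeColoring_iff.mp hc.proper (f u) (f v) (f w)
      (hf.1.ne huv) (hf.1.ne huw) (hf.1.ne hvw)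
  · obtain ⟨z', huz, hz⟩ := hc.exists_color_eq (f u) (f v) (f w) (hf.1.ne hvw)
    obtain ⟨z, rfl⟩ := hf.2 z'
    exact ⟨z, fun h => huz (h ▸ rfl), hz⟩

end IsOneFactorization

theorem doubleStar_adj_inl_zero {a b : ℕ} (i : Fin a) :
    (doubleStar a b).Adj (.inl 0) (.inr (.inl i)) := by
  simp [doubleStar]

theorem doubleStar_adj_inl_one {a b : ℕ} (j : Fin b) :
    (doubleStar a b).Adj (.inl 1) (.inr (.inr j)) := by
  simp [doubleStar]

-- `y = .inl 0`, `x = .inl 1`, `yᵢ = .inr (.inl i)`, `xⱼ = .inr (.inr j)`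
theorem IsOneFactorization.exists_leaf_colors_eq {d : Sym2 (Fin 2 ⊕ Fin 2 ⊕ Fin 2) → ℕ}
    (hd : IsOneFactorization d) :
    ∃ i j, d s(.inl 0, .inr (.inl i)) = d s(.inl 1, .inr (.inr j)) := by
  by_contra! cross
  have hx_y : ∀ i i', i ≠ i' → d s(.inl 1, .inr (.inl i')) = d s(.inl 0, .inr (.inl i)) := by
    intro i i' hii'
    refine hd.color_eq_of_forall_ne (by simp) fun z hxz hz heq => ?_
    rcases z with a | k | j
    · fin_cases a
      · rw [Sym2.eq_swap] at heq
        exact absurd (hd.eq_of_color_eq (by simp) (by simp) heq) (by simp)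
      · exact hxz rfl
    · obtain rfl | rfl : k = i ∨ k = i' := by omega
      · rw [Sym2.eq_swap, Sym2.eq_swap (a := Sum.inl 0)] at heq
        exact absurd (hd.eq_of_color_eq (by simp) (by simp) heq) (by simp)
      · exact hz rfl
    · exact cross i j heq.symm
  have hx₀_x₁ : ∀ i i', i ≠ i' →
      d s(.inr (.inr 0), .inr (.inr 1)) = d s(.inl 0, .inr (.inl i)) := by
    intro i i' hii'
    refine hd.color_eq_of_forall_ne (by simp) fun z hxz hz heq => ?_
    rcases z with a | k | j
    · fin_cases a
      · rw [Sym2.eq_swap] at heq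
        exact absurd (hd.eq_of_color_eq (by simp) (by simp) heq) (by simp)
      · rw [Sym2.eq_swap] at heq
        exact cross i 0 heq.symm
    · obtain rfl | rfl : k = i ∨ k = i' := by omega
      · rw [Sym2.eq_swap, Sym2.eq_swap (a := Sum.inl 0)] at heq
        exact absurd (hd.eq_of_color_eq (by simp) (by simp) heq) (by simp)
      · rw [← hx_y i k hii', Sym2.eq_swap, Sym2.eq_swap (a := Sum.inl 1)] at heq
        exact absurd (hd.eq_of_color_eq (by simp) (by simp) heq) (by simp)
    · fin_cases j
      · exact hxz rfl
      · exact hz rfl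
  exact absurd (hd.eq_of_color_eq (by simp) (by simp)
    ((hx₀_x₁ 0 1 (by decide)).symm.trans (hx₀_x₁ 1 0 (by decide)))) (by simp)

/-- The round-robin 1-factorization: vertices `0, …, 4` are `ZMod 5` and `5` is `∞`; the edge
`{i, j}` gets color `(i + j) / 2 = 3 (i + j)` and the edge `{i, ∞}` gets color `i`. -/
def roundRobinColor (i j : Fin 6) : ℕ :=
  if i = 5 then j else if j = 5 then i else 3 * (i + j) % 5

theorem roundRobinColor_comm : ∀ i j, roundRobinColor i j = roundRobinColor j i := by decide

def k6Coloring : Sym2 (Fin 6) → ℕ := Sym2.lift ⟨roundRobinColor, roundRobinColor_comm⟩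

theorem isProperEdgeColoring_k6Coloring :
    IsProperEdgeColoring (⊤ : SimpleGraph (Fin 6)) k6Coloring :=
  isProperEdgeColoring_iff.mpr (by decide)

theorem k6Coloring_mem_range :
    ∀ e ∈ (⊤ : SimpleGraph (Fin 6)).edgeSet, k6Coloring e ∈ Finset.range 5 := by
  refine Sym2.ind fun u v huv => Finset.mem_range.mpr ?_
  revert u v
  decide

/-- `K₆` admits a proper edge coloring with only 5 colors, and every
proper edge coloring of `K₆` using at most 5 colors contains no rainbow copy of
`DS_{2,2}`. -/
theorem K6_five_colors_no_rainbow_DS22 :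
    (∃ c : Sym2 (Fin 6) → ℕ, IsProperEdgeColoring (⊤ : SimpleGraph (Fin 6)) c ∧
      ∃ t : Finset ℕ, t.card ≤ 5 ∧
        ∀ e ∈ (⊤ : SimpleGraph (Fin 6)).edgeSet, c e ∈ t) ∧
    (∀ c : Sym2 (Fin 6) → ℕ, IsProperEdgeColoring (⊤ : SimpleGraph (Fin 6)) c →
      (∃ t : Finset ℕ, t.card ≤ 5 ∧
        ∀ e ∈ (⊤ : SimpleGraph (Fin 6)).edgeSet, c e ∈ t) →
      ¬ ContainsRainbowCopy (doubleStar 2 2) (⊤ : SimpleGraph (Fin 6)) c) := by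
  refine ⟨⟨k6Coloring, isProperEdgeColoring_k6Coloring, Finset.range 5, by simp,
    k6Coloring_mem_range⟩, ?_⟩
  rintro c hc ⟨t, ht, hall⟩ ⟨f, ⟨hinj, -⟩, hrainbow⟩
  have hf : Function.Bijective f := (Fintype.bijective_iff_injective_and_card f).mpr ⟨hinj, rfl⟩
  have hfac : IsOneFactorization c :=
    .of_card_colors_lt hc (by rw [Fintype.card_fin]; omega) hall
  obtain ⟨i, j, hij⟩ := (hfac.comp_sym2Map hf).exists_leaf_colors_eq
  exact hrainbow _ (doubleStar_adj_inl_zero i) _ (doubleStar_adj_inl_one j) (by simp) hij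
end

section
/- Every proper edge coloring of the complete graph K_6 that is not rainbow (i.e., some two distinct edges of K_6 receive the same color) contains a copy of the double star DS_{2,2} with exactly 3 uniquely colored edges. -/
open SimpleGraph

/-! Two distinct edges `a b`, `u v` of the same color are disjoint, since the coloring is
proper. With two further vertices `p`, `q`, the double star with central edge `a u`, leaves
`b`, `p` at `a` and `v`, `q` at `u` has the repeated color on `a b` and `u v`, while `a u`,
`a p`, `u q` are uniquely colored as soon as `a p` and `u q` differ in color. If they do not,
`b p` differs in color from `a p`, so exchanging the roles of `a` and `b` works. -/

variable {V : Type*}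

theorem IsProperEdgeColoring.ne_of_adj {G : SimpleGraph V} {c : Sym2 V → ℕ}
    (hc : IsProperEdgeColoring G c) {x y z : V} (hxy : G.Adj x y) (hxz : G.Adj x z)
    (hyz : y ≠ z) : c s(x, y) ≠ c s(x, z) :=
  hc _ hxy _ hxz (fun h => hyz (Sym2.congr_right.1 h))
    ⟨x, Sym2.mem_mk_left _ _, Sym2.mem_mk_left _ _⟩

theorem IsProperEdgeColoring.comap_s14 {W : Type*} {H : SimpleGraph W} {G : SimpleGraph V}
    {c : Sym2 V → ℕ} (hc : IsProperEdgeColoring G c) {f : W → V} (hf : IsCopy H G f) :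
    IsProperEdgeColoring H (c ∘ Sym2.map f) := by
  intro e₁ he₁ e₂ he₂ hne ⟨v, hv₁, hv₂⟩
  induction e₁ using Sym2.ind with | _ a b => ?_
  induction e₂ using Sym2.ind with | _ a' b' => ?_
  refine hc _ (hf.2 _ _ he₁) _ (hf.2 _ _ he₂) ?_ ⟨f v, Sym2.mem_map.2 ⟨v, hv₁, rfl⟩,
    Sym2.mem_map.2 ⟨v, hv₂, rfl⟩⟩
  exact fun h => hne (Sym2.map.injective hf.1 h)

theorem isCopy_top_iff {W : Type*} (H : SimpleGraph W) (f : W → V) :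
    IsCopy H ⊤ f ↔ Function.Injective f :=
  ⟨And.left, fun hf => ⟨hf, fun _ _ h => hf.ne h.ne⟩⟩

theorem copyUniqueCount_eq_ncard_uniqueEdges {W : Type*} (H : SimpleGraph W)
    (c : Sym2 V → ℕ) (f : W → V) :
    copyUniqueCount H c f = (uniqueEdges H (c ∘ Sym2.map f)).ncard :=
  rfl

theorem doubleStar_two_two_edgeSet : (doubleStar 2 2).edgeSet =
    {s(.inl 0, .inl 1), s(.inl 0, .inr (.inl 0)), s(.inl 0, .inr (.inl 1)),
     s(.inl 1, .inr (.inr 0)), s(.inl 1, .inr (.inr 1))} := by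
  rw [doubleStar, edgeSet_fromEdgeSet]
  ext e
  simp [Fin.exists_fin_two]
  constructor
  · rintro ⟨h | h | h, hd⟩ <;> tauto
  · rintro (rfl | rfl | rfl | rfl | rfl) <;> refine ⟨by tauto, by decide⟩

theorem ncard_uniqueEdges_doubleStar_two_two {d : Sym2 (Fin 2 ⊕ Fin 2 ⊕ Fin 2) → ℕ}
    (hd : IsProperEdgeColoring (doubleStar 2 2) d)
    (hsame : d s(.inl 0, .inr (.inl 0)) = d s(.inl 1, .inr (.inr 0)))
    (hne : d s(.inl 0, .inr (.inl 1)) ≠ d s(.inl 1, .inr (.inr 1))) :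
    (uniqueEdges (doubleStar 2 2) d).ncard = 3 := by
  have hE := doubleStar_two_two_edgeSet
  have hyx₁ : d s(.inl 0, .inl 1) ≠ d s(.inl 1, .inr (.inr 0)) :=
    hd _ (by simp [hE]) _ (by simp [hE]) (by decide) ⟨.inl 1, by simp, by simp⟩
  have hyx₂ : d s(.inl 0, .inl 1) ≠ d s(.inl 1, .inr (.inr 1)) :=
    hd _ (by simp [hE]) _ (by simp [hE]) (by decide) ⟨.inl 1, by simp, by simp⟩
  have hyy₁ : d s(.inl 0, .inl 1) ≠ d s(.inl 0, .inr (.inl 0)) :=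
    hd _ (by simp [hE]) _ (by simp [hE]) (by decide) ⟨.inl 0, by simp, by simp⟩
  have hyy₂ : d s(.inl 0, .inl 1) ≠ d s(.inl 0, .inr (.inl 1)) :=
    hd _ (by simp [hE]) _ (by simp [hE]) (by decide) ⟨.inl 0, by simp, by simp⟩
  have hy₁y₂ : d s(.inl 0, .inr (.inl 0)) ≠ d s(.inl 0, .inr (.inl 1)) :=
    hd _ (by simp [hE]) _ (by simp [hE]) (by decide) ⟨.inl 0, by simp, by simp⟩
  have hx₁x₂ : d s(.inl 1, .inr (.inr 0)) ≠ d s(.inl 1, .inr (.inr 1)) :=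
    hd _ (by simp [hE]) _ (by simp [hE]) (by decide) ⟨.inl 1, by simp, by simp⟩
  have hunique : uniqueEdges (doubleStar 2 2) d =
      {s(.inl 0, .inl 1), s(.inl 0, .inr (.inl 1)), s(.inl 1, .inr (.inr 1))} := by
    ext e
    simp only [uniqueEdges, hE, Set.mem_ofPred_eq, Set.mem_insert_iff, Set.mem_singleton_iff]
    constructor
    · rintro ⟨rfl | rfl | rfl | rfl | rfl, hu⟩
      · exact .inl rfl
      · exact absurd (hu _ (by simp) hsame.symm) (by decide)
      · exact .inr (.inl rfl)
      · exact absurd (hu _ (by simp) hsame) (by decide)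
      · exact .inr (.inr rfl)
    · rintro (rfl | rfl | rfl) <;> refine ⟨by simp, ?_⟩ <;>
        rintro e' (rfl | rfl | rfl | rfl | rfl) h <;> simp_all
  rw [hunique, Set.ncard_insert_of_notMem (by decide), Set.ncard_insert_of_notMem (by decide),
    Set.ncard_singleton]

theorem copyUniqueCount_doubleStar_two_two {G : SimpleGraph V} {c : Sym2 V → ℕ}
    (hc : IsProperEdgeColoring G c) {f : Fin 2 ⊕ Fin 2 ⊕ Fin 2 → V}
    (hf : IsCopy (doubleStar 2 2) G f)
    (hsame : c s(f (.inl 0), f (.inr (.inl 0))) = c s(f (.inl 1), f (.inr (.inr 0))))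
    (hne : c s(f (.inl 0), f (.inr (.inl 1))) ≠ c s(f (.inl 1), f (.inr (.inr 1)))) :
    copyUniqueCount (doubleStar 2 2) c f = 3 :=
  (copyUniqueCount_eq_ncard_uniqueEdges _ c f).trans
    (ncard_uniqueEdges_doubleStar_two_two (hc.comap_s14 hf) hsame hne)

def doubleStarMap (y x y₁ y₂ x₁ x₂ : V) : Fin 2 ⊕ Fin 2 ⊕ Fin 2 → V :=
  Sum.elim ![y, x] (Sum.elim ![y₁, y₂] ![x₁, x₂])

theorem doubleStarMap_injective {y x y₁ y₂ x₁ x₂ : V} (h : [y, x, y₁, y₂, x₁, x₂].Nodup) :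
    Function.Injective (doubleStarMap y x y₁ y₂ x₁ x₂) := by
  simp only [List.nodup_cons, List.mem_cons, List.not_mem_nil, or_false, not_or,
    List.nodup_nil] at h
  intro i j hij
  rcases i with i | i | i <;> rcases j with j | j | j <;> fin_cases i <;> fin_cases j <;>
    simp_all [doubleStarMap, eq_comm]

theorem containsExactlyKUniqueCopy_doubleStar_top {c : Sym2 V → ℕ}
    (hc : IsProperEdgeColoring ⊤ c) {y x y₁ y₂ x₁ x₂ : V} (hnd : [y, x, y₁, y₂, x₁, x₂].Nodup)
    (hsame : c s(y, y₁) = c s(x, x₁)) (hne : c s(y, y₂) ≠ c s(x, x₂)) :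
    ContainsExactlyKUniqueCopy (doubleStar 2 2) ⊤ c 3 :=
  have hf := (isCopy_top_iff _ _).2 (doubleStarMap_injective hnd)
  ⟨_, hf, copyUniqueCount_doubleStar_two_two hc hf hsame hne⟩

theorem containsExactlyKUniqueCopy_doubleStar_of_eq_color [Fintype V]
    (hV : 6 ≤ Fintype.card V) {c : Sym2 V → ℕ} (hc : IsProperEdgeColoring ⊤ c)
    {a b u v : V} (hab : a ≠ b) (huv : u ≠ v) (hne : s(a, b) ≠ s(u, v))
    (hcol : c s(a, b) = c s(u, v)) :
    ContainsExactlyKUniqueCopy (doubleStar 2 2) ⊤ c 3 := by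
  classical
  have hdisj : ∀ w ∈ s(a, b), w ∉ s(u, v) := fun w hw hw' => hc _ hab _ huv hne ⟨w, hw, hw'⟩ hcol
  simp only [Sym2.mem_iff, forall_eq_or_imp, forall_eq, not_or] at hdisj
  have hrest : 1 < ({a, b, u, v}ᶜ : Finset V).card := by
    have := Finset.card_le_four (a := a) (b := b) (c := u) (d := v)
    rw [Finset.card_compl]
    omega
  obtain ⟨p, hp, q, hq, hpq⟩ := Finset.one_lt_card.1 hrest
  simp only [Finset.mem_compl, Finset.mem_insert, Finset.mem_singleton, not_or] at hp hq
  by_cases hcross : c s(a, p) = c s(u, q)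
  · have hbp : c s(b, p) ≠ c s(u, q) := by
      rw [← hcross, Sym2.eq_swap, Sym2.eq_swap (a := a)]
      exact hc.ne_of_adj hp.2.1 hp.1 (Ne.symm hab)
    exact containsExactlyKUniqueCopy_doubleStar_top hc (by grind) (Sym2.eq_swap ▸ hcol) hbp
  · exact containsExactlyKUniqueCopy_doubleStar_top hc (by grind) hcol hcross

/-- Every proper edge coloring of `K₆` that is not rainbow (two
distinct edges share a color) contains a copy of `DS_{2,2}` with exactly 3 uniquely
colored edges. -/
theorem K6_not_rainbow_has_exactly3unique_DS22 (c : Sym2 (Fin 6) → ℕ)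
    (hc : IsProperEdgeColoring (⊤ : SimpleGraph (Fin 6)) c)
    (hnr : ∃ e₁ ∈ (⊤ : SimpleGraph (Fin 6)).edgeSet,
      ∃ e₂ ∈ (⊤ : SimpleGraph (Fin 6)).edgeSet, e₁ ≠ e₂ ∧ c e₁ = c e₂) :
    ContainsExactlyKUniqueCopy (doubleStar 2 2) (⊤ : SimpleGraph (Fin 6)) c 3 := by
  obtain ⟨⟨a, b⟩, hab, ⟨u, v⟩, huv, hne, hcol⟩ := hnr
  exact containsExactlyKUniqueCopy_doubleStar_of_eq_color (by simp) hc hab huv hne hcol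
end
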